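/- arXiv:math/0208065 — 11 statements merged into one kernel-verified Lean document; each statement's English description precedes it below -/
import Mathlib

section
/- Let a, b, c, d ∈ ℤ with gcd(a,b) = 1 and ad − bc ≠ 0, and let σ = {s·(a,b) + t·(c,d) : s, t ∈ ℚ, s ≥ 0, t ≥ 0} ⊆ ℚ². Then there exist e, f ∈ ℤ with f ≠ 0 and a 2×2 integer matrix M with determinant ±1 such that the linear map determined by M maps σ bijectively onto the cone σ_{e,f} = {s·(1,0) + t·(e,f) : s, t ∈ ℚ, s ≥ 0, t ≥ 0}. -/
/-!
Choose a Bézout relation `u a + v b = 1`. The unimodular matrix `[[u, v], [-b, a]]` sends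
`(a, b)` to `(1, 0)` and `(c, d)` to `(u c + v d, a d - b c)`, and an injective linear map
sends the cone spanned by two vectors onto the cone spanned by their images.
-/

/-- For `e f : ℤ`, the cone `σ_{e,f} = {s•(1,0) + t•(e,f) : s,t ∈ ℚ, s ≥ 0, t ≥ 0} ⊆ ℚ²`. -/
def coneQ (e f : ℤ) : Set (ℚ × ℚ) :=
  {p | ∃ s t : ℚ, 0 ≤ s ∧ 0 ≤ t ∧ p = s • ((1 : ℚ), (0 : ℚ)) + t • ((e : ℚ), (f : ℚ))}

section Cone

variable {R M N : Type*} [Semiring R] [PartialOrder R] [AddCommMonoid M] [Module R M]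
  [AddCommMonoid N] [Module R N]

def coneSpan (x y : M) : Set M :=
  {p | ∃ s t : R, 0 ≤ s ∧ 0 ≤ t ∧ p = s • x + t • y}

theorem LinearMap.image_coneSpan (f : M →ₗ[R] N) (x y : M) :
    f '' coneSpan (R := R) x y = coneSpan (R := R) (f x) (f y) := by
  ext q
  constructor
  · rintro ⟨p, ⟨s, t, hs, ht, rfl⟩, rfl⟩
    exact ⟨s, t, hs, ht, by simp only [map_add, map_smul]⟩
  · rintro ⟨s, t, hs, ht, rfl⟩
    exact ⟨s • x + t • y, ⟨s, t, hs, ht, rfl⟩, by simp only [map_add, map_smul]⟩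

theorem LinearMap.bijOn_coneSpan (f : M →ₗ[R] N) (hf : Function.Injective f) (x y : M) :
    Set.BijOn f (coneSpan (R := R) x y) (coneSpan (R := R) (f x) (f y)) :=
  f.image_coneSpan x y ▸ hf.injOn.bijOn_image

end Cone

namespace Matrix

variable {R : Type*} [CommRing R]

def toLinProd (A : Matrix (Fin 2) (Fin 2) R) : R × R →ₗ[R] R × R where
  toFun p := (A 0 0 * p.1 + A 0 1 * p.2, A 1 0 * p.1 + A 1 1 * p.2)
  map_add' p q := by ext <;> dsimp <;> ring
  map_smul' r p := by ext <;> dsimp <;> ring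

@[simp]
theorem toLinProd_apply (A : Matrix (Fin 2) (Fin 2) R) (p : R × R) :
    A.toLinProd p = (A 0 0 * p.1 + A 0 1 * p.2, A 1 0 * p.1 + A 1 1 * p.2) :=
  rfl

theorem toLinProd_injective [NoZeroDivisors R] {A : Matrix (Fin 2) (Fin 2) R} (hA : A.det ≠ 0) :
    Function.Injective A.toLinProd := by
  refine (injective_iff_map_eq_zero _).2 fun p hp => ?_
  simp only [toLinProd_apply, Prod.mk_eq_zero] at hp
  obtain ⟨h₁, h₂⟩ := hp
  -- multiplying by the adjugate gives `det A • p = 0`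
  have hx : A.det * p.1 = 0 := by rw [det_fin_two]; linear_combination A 1 1 * h₁ - A 0 1 * h₂
  have hy : A.det * p.2 = 0 := by rw [det_fin_two]; linear_combination A 0 0 * h₂ - A 1 0 * h₁
  exact Prod.ext ((mul_eq_zero.1 hx).resolve_left hA) ((mul_eq_zero.1 hy).resolve_left hA)

end Matrix

/-- If `gcd(a,b) = 1` and `ad − bc ≠ 0`, then the cone spanned by `(a,b)` and `(c,d)` is
mapped bijectively onto some cone `σ_{e,f}` (with `f ≠ 0`) by a linear map given by a
`2×2` integer matrix of determinant `±1`. -/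
theorem stmt2 (a b c d : ℤ) (hgcd : Int.gcd a b = 1) (hdet : a * d - b * c ≠ 0) :
    ∃ (e f : ℤ) (M : Matrix (Fin 2) (Fin 2) ℤ),
      f ≠ 0 ∧ (M.det = 1 ∨ M.det = -1) ∧
      Set.BijOn
        (fun p : ℚ × ℚ =>
          ((M 0 0 : ℚ) * p.1 + (M 0 1 : ℚ) * p.2,
           (M 1 0 : ℚ) * p.1 + (M 1 1 : ℚ) * p.2))
        {p : ℚ × ℚ | ∃ s t : ℚ, 0 ≤ s ∧ 0 ≤ t ∧
          p = s • ((a : ℚ), (b : ℚ)) + t • ((c : ℚ), (d : ℚ))}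
        (coneQ e f) := by
  obtain ⟨u, v, huv⟩ := Int.isCoprime_iff_gcd_eq_one.2 hgcd
  set M : Matrix (Fin 2) (Fin 2) ℤ := !![u, v; -b, a]
  have hM : M.det = 1 := by simp only [M, Matrix.det_fin_two_of]; linear_combination huv
  set A : Matrix (Fin 2) (Fin 2) ℚ := M.map (↑)
  have hA : A.det ≠ 0 := by rw [← Int.cast_det, hM]; exact one_ne_zero
  have key := A.toLinProd.bijOn_coneSpan (Matrix.toLinProd_injective hA)
    ((a : ℚ), (b : ℚ)) ((c : ℚ), (d : ℚ))
  have hab : A.toLinProd ((a : ℚ), (b : ℚ)) = (1, 0) := by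
    simp only [A, M, Matrix.toLinProd_apply, Matrix.map_apply, Matrix.of_apply, Matrix.cons_val',
      Matrix.cons_val_zero, Matrix.cons_val_fin_one, Matrix.cons_val_one, Prod.mk.injEq]
    exact ⟨mod_cast huv, by push_cast; ring⟩
  have hcd : A.toLinProd ((c : ℚ), (d : ℚ)) =
      (((u * c + v * d : ℤ) : ℚ), ((a * d - b * c : ℤ) : ℚ)) := by
    simp only [A, M, Matrix.toLinProd_apply, Matrix.map_apply, Matrix.of_apply, Matrix.cons_val',
      Matrix.cons_val_zero, Matrix.cons_val_fin_one, Matrix.cons_val_one, Prod.mk.injEq]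
    exact ⟨by push_cast; ring, by push_cast; ring⟩
  rw [hab, hcd] at key
  exact ⟨u * c + v * d, a * d - b * c, M, hdet, Or.inl hM, key⟩
end

section
/- Let m, n ∈ ℤ with n > 0 and gcd(|m|, n) = 1. Let S = {w ∈ ℤ² : w₁ ≥ 0 and m·w₁ + n·w₂ ≥ 0} (the semigroup S_σ for the cone σ generated by (1,0) and (m,n)). Then S is generated as an additive monoid by its elements lying in the parallelogram {s·(0,1) + t·(n,−m) : s, t ∈ ℚ, 0 ≤ s ≤ 1, 0 ≤ t ≤ 1}; that is, every element of S is a finite sum (with repetitions allowed) of lattice points of this parallelogram. -/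
private lemma memGen (m n : ℤ) (hn : 0 < n) (p : ℤ × ℤ)
    (h1 : 0 ≤ p.1) (h2 : p.1 ≤ n) (h3 : 0 ≤ m * p.1 + n * p.2) (h4 : m * p.1 + n * p.2 ≤ n) :
    p ∈ {p : ℤ × ℤ | ∃ s t : ℚ, 0 ≤ s ∧ s ≤ 1 ∧ 0 ≤ t ∧ t ≤ 1 ∧
      ((p.1 : ℚ), (p.2 : ℚ)) = s • ((0 : ℚ), (1 : ℚ)) + t • ((n : ℚ), (-m : ℚ))} := by
  have hnq : (0 : ℚ) < (n : ℚ) := by exact_mod_cast hn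
  refine ⟨((m * p.1 + n * p.2 : ℤ) : ℚ) / n, ((p.1 : ℤ) : ℚ) / n, ?_, ?_, ?_, ?_, ?_⟩
  · apply div_nonneg _ hnq.le; exact_mod_cast h3
  · rw [div_le_one hnq]; exact_mod_cast h4
  · apply div_nonneg _ hnq.le; exact_mod_cast h1
  · rw [div_le_one hnq]; exact_mod_cast h2
  · simp only [Prod.smul_mk, smul_eq_mul, Prod.mk_add_mk, Prod.mk.injEq]
    constructor
    · push_cast; field_simp; ring
    · push_cast; field_simp; ring

/-- Let `m n : ℤ` with `n > 0` and `gcd(|m|,n) = 1`. The semigroup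
`S = {w ∈ ℤ² : w₁ ≥ 0 ∧ m·w₁ + n·w₂ ≥ 0}` is generated, as an additive monoid, by its
lattice points lying in the parallelogram spanned by `(0,1)` and `(n,−m)`:
every element of `S` lies in the additive monoid closure of the lattice points of the
parallelogram. -/
theorem stmt5 (m n : ℤ) (hn : 0 < n) (hgcd : Int.gcd m n = 1) :
    ∀ w : ℤ × ℤ, 0 ≤ w.1 → 0 ≤ m * w.1 + n * w.2 →
      w ∈ AddSubmonoid.closure
        {p : ℤ × ℤ | ∃ s t : ℚ, 0 ≤ s ∧ s ≤ 1 ∧ 0 ≤ t ∧ t ≤ 1 ∧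
          ((p.1 : ℚ), (p.2 : ℚ)) = s • ((0 : ℚ), (1 : ℚ)) + t • ((n : ℚ), (-m : ℚ))} := by
  set S := {p : ℤ × ℤ | ∃ s t : ℚ, 0 ≤ s ∧ s ≤ 1 ∧ 0 ≤ t ∧ t ≤ 1 ∧
      ((p.1 : ℚ), (p.2 : ℚ)) = s • ((0 : ℚ), (1 : ℚ)) + t • ((n : ℚ), (-m : ℚ))} with hS
  have key : ∀ N : ℕ, ∀ w : ℤ × ℤ, w.1 + (m * w.1 + n * w.2) ≤ N → 0 ≤ w.1 →
      0 ≤ m * w.1 + n * w.2 → w ∈ AddSubmonoid.closure S := by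
    intro N
    induction N with
    | zero =>
      intro w hN h1 h2
      have hw1 : w.1 = 0 := by omega
      have h2' : 0 ≤ n * w.2 := by rw [hw1] at h2; simpa using h2
      have h3' : n * w.2 ≤ 0 := by rw [hw1] at hN; push_cast at hN; linarith
      have hw2 : w.2 = 0 := by
        rcases mul_eq_zero.mp (le_antisymm h3' h2') with h | h
        · omega
        · exact h
      have : w = 0 := Prod.ext hw1 hw2
      rw [this]; exact zero_mem _
    | succ N ih =>
      intro w hN h1 h2
      by_cases hc1 : w.1 ≤ n
      · by_cases hc2 : m * w.1 + n * w.2 ≤ n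
        · exact AddSubmonoid.subset_closure (memGen m n hn w h1 hc1 h2 hc2)
        · -- subtract (0,1)
          have hg : ((0 : ℤ), (1 : ℤ)) ∈ S :=
            memGen m n hn (0, 1) le_rfl hn.le (by simpa using hn.le) (by simp)
          have hw' : (w.1, w.2 - 1) ∈ AddSubmonoid.closure S := by
            refine ih _ ?_ ?_ ?_ <;> dsimp only <;> push_cast at hN ⊢ <;> nlinarith
          have : w = (0, 1) + (w.1, w.2 - 1) := by
            ext <;> simp
          rw [this]
          exact add_mem (AddSubmonoid.subset_closure hg) hw'
      · -- subtract (n, -m)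
        have hg : ((n : ℤ), (-m : ℤ)) ∈ S :=
          memGen m n hn (n, -m) hn.le le_rfl (by ring_nf; simp) (by ring_nf; simpa using hn.le)
        have hw' : (w.1 - n, w.2 + m) ∈ AddSubmonoid.closure S := by
          refine ih _ ?_ ?_ ?_ <;> dsimp only <;> push_cast at hN ⊢ <;> nlinarith
        have : w = (n, -m) + (w.1 - n, w.2 + m) := by
          ext <;> simp
        rw [this]
        exact add_mem (AddSubmonoid.subset_closure hg) hw'
  intro w h1 h2
  exact key (w.1 + (m * w.1 + n * w.2)).toNat w (by omega) h1 h2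
end

section
/- Let m, n ∈ ℤ with n > 0 and gcd(|m|, n) = 1. Let S = {w ∈ ℤ² : w₁ ≥ 0 and m·w₁ + n·w₂ ≥ 0} (the semigroup S_σ for the cone σ generated by (1,0) and (m,n)). Then S is generated as an additive monoid by its elements lying in the triangle {s·(0,1) + t·(n,−m) : s, t ∈ ℚ, s ≥ 0, t ≥ 0, s + t ≤ 1}; that is, every element of S is a finite sum (with repetitions allowed) of lattice points of this triangle. -/
private lemma keylem (m n a : ℤ) (hn : 0 < n) (hgcd : Int.gcd m n = 1)
    (ha1 : 1 ≤ a) (han : a < n) :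
    ∃ a' : ℤ, 1 ≤ a' ∧ a' ≤ a ∧ (m * a') % n ≤ (m * a) % n ∧ a' + (m * a') % n ≤ n := by
  obtain ⟨a', ha', hmin⟩ := Finset.exists_min_image (Finset.Icc 1 a)
    (fun j => (m * j) % n) ⟨a, by simp [ha1]⟩
  rw [Finset.mem_Icc] at ha'
  refine ⟨a', ha'.1, ha'.2, hmin a (by simp [ha1]), ?_⟩
  by_contra hcon
  push_neg at hcon
  have hcop : IsCoprime (n : ℤ) m := (Int.isCoprime_iff_gcd_eq_one.mpr hgcd).symm
  have hmaps : ∀ j ∈ Finset.Icc (1:ℤ) a', (m * j) % n ∈ Finset.Icc (n - a' + 1) (n - 1) := by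
    intro j hj
    rw [Finset.mem_Icc] at hj ⊢
    have h1 : (m * a') % n ≤ (m * j) % n := hmin j (Finset.mem_Icc.mpr ⟨hj.1, hj.2.trans ha'.2⟩)
    have h2 : (m * j) % n < n := Int.emod_lt_of_pos _ hn
    omega
  have hinj : Set.InjOn (fun j => (m * j) % n) (Finset.Icc (1:ℤ) a') := by
    intro i hi j hj hij
    simp only [Finset.coe_Icc, Set.mem_Icc] at hi hj
    have hdvd : n ∣ m * j - m * i := Int.ModEq.dvd hij
    have : m * j - m * i = m * (j - i) := by ring
    rw [this] at hdvd
    have hdvd2 : n ∣ j - i := hcop.dvd_of_dvd_mul_left hdvd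
    obtain ⟨k, hk⟩ := hdvd2
    have hk0 : k = 0 := by
      rcases lt_trichotomy k 0 with h | h | h
      · nlinarith [ha'.2]
      · exact h
      · nlinarith [ha'.2]
    have hji : j - i = 0 := by rw [hk, hk0]; ring
    omega
  have hcard := Finset.card_le_card_of_injOn _ hmaps hinj
  rw [Int.card_Icc, Int.card_Icc] at hcard
  omega

private lemma mem_gen (m n : ℤ) (hn : 0 < n) (a b : ℤ) (h0 : 0 ≤ a)
    (h1 : 0 ≤ m * a + n * b) (h2 : a + (m * a + n * b) ≤ n) :
    (a, b) ∈ {p : ℤ × ℤ | ∃ s t : ℚ, 0 ≤ s ∧ 0 ≤ t ∧ s + t ≤ 1 ∧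
      ((p.1 : ℚ), (p.2 : ℚ)) = s • ((0 : ℚ), (1 : ℚ)) + t • ((n : ℚ), (-m : ℚ))} := by
  have hn' : (0:ℚ) < (n:ℚ) := by exact_mod_cast hn
  have hne : (n:ℚ) ≠ 0 := ne_of_gt hn'
  refine ⟨((m * a + n * b : ℤ) : ℚ) / (n:ℚ), (a:ℚ) / (n:ℚ), ?_, ?_, ?_, ?_⟩
  · apply div_nonneg _ hn'.le
    exact_mod_cast h1
  · apply div_nonneg _ hn'.le
    exact_mod_cast h0
  · rw [← add_div, div_le_one hn']
    have h2' : (a:ℚ) + ((m:ℚ) * a + (n:ℚ) * b) ≤ (n:ℚ) := by exact_mod_cast h2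
    push_cast
    linarith
  · simp only [Prod.smul_mk, smul_eq_mul, Prod.mk_add_mk, Prod.mk.injEq]
    constructor
    · field_simp
      ring
    · field_simp
      push_cast
      ring

/-- Let `m n : ℤ` with `n > 0` and `gcd(|m|,n) = 1`. The semigroup
`S = {w ∈ ℤ² : w₁ ≥ 0 ∧ m·w₁ + n·w₂ ≥ 0}` is generated, as an additive monoid, by its
lattice points lying in the triangle with vertices `(0,0)`, `(0,1)` and `(n,−m)`:
every element of `S` lies in the additive monoid closure of the lattice points of the
triangle. -/
theorem stmt6 (m n : ℤ) (hn : 0 < n) (hgcd : Int.gcd m n = 1) :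
    ∀ w : ℤ × ℤ, 0 ≤ w.1 → 0 ≤ m * w.1 + n * w.2 →
      w ∈ AddSubmonoid.closure
        {p : ℤ × ℤ | ∃ s t : ℚ, 0 ≤ s ∧ 0 ≤ t ∧ s + t ≤ 1 ∧
          ((p.1 : ℚ), (p.2 : ℚ)) = s • ((0 : ℚ), (1 : ℚ)) + t • ((n : ℚ), (-m : ℚ))} := by
  have key : ∀ k : ℕ, ∀ w : ℤ × ℤ, 0 ≤ w.1 → 0 ≤ m * w.1 + n * w.2 →
      w.1 + (m * w.1 + n * w.2) ≤ (k : ℤ) →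
      w ∈ AddSubmonoid.closure
        {p : ℤ × ℤ | ∃ s t : ℚ, 0 ≤ s ∧ 0 ≤ t ∧ s + t ≤ 1 ∧
          ((p.1 : ℚ), (p.2 : ℚ)) = s • ((0 : ℚ), (1 : ℚ)) + t • ((n : ℚ), (-m : ℚ))} := by
    intro k
    induction k with
    | zero =>
      rintro ⟨a, b⟩ h1 h2 h3
      simp only at h1 h2 h3
      have h3' : a + (m * a + n * b) ≤ 0 := by exact_mod_cast h3
      exact AddSubmonoid.subset_closure (mem_gen m n hn a b h1 h2 (by linarith))
    | succ k ih =>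
      rintro ⟨a, b⟩ h1 h2 h3
      simp only at h1 h2 h3
      by_cases hc : a + (m * a + n * b) ≤ n
      · exact AddSubmonoid.subset_closure (mem_gen m n hn a b h1 h2 hc)
      · by_cases hs : n ≤ m * a + n * b
        · -- subtract (0,1)
          have hg : ((0:ℤ), (1:ℤ)) ∈ {p : ℤ × ℤ | ∃ s t : ℚ, 0 ≤ s ∧ 0 ≤ t ∧ s + t ≤ 1 ∧
              ((p.1 : ℚ), (p.2 : ℚ)) = s • ((0 : ℚ), (1 : ℚ)) + t • ((n : ℚ), (-m : ℚ))} :=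
            mem_gen m n hn 0 1 le_rfl (by linarith) (by linarith)
          have hw : ((a, b) : ℤ × ℤ) = (a, b - 1) + (0, 1) := by
            simp [Prod.ext_iff]
          rw [hw]
          refine AddSubmonoid.add_mem _ (ih (a, b - 1) (by simpa) ?_ ?_)
            (AddSubmonoid.subset_closure hg)
          · simp only
            linarith
          · simp only
            push_cast at h3 ⊢
            linarith
        · by_cases ht : n ≤ a
          · -- subtract (n, -m)
            have hg : ((n:ℤ), (-m:ℤ)) ∈ {p : ℤ × ℤ | ∃ s t : ℚ, 0 ≤ s ∧ 0 ≤ t ∧ s + t ≤ 1 ∧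
                ((p.1 : ℚ), (p.2 : ℚ)) = s • ((0 : ℚ), (1 : ℚ)) + t • ((n : ℚ), (-m : ℚ))} :=
              mem_gen m n hn n (-m) hn.le (by ring_nf; simp) (by ring_nf; simp)
            have hw : ((a, b) : ℤ × ℤ) = (a - n, b + m) + (n, -m) := by
              simp [Prod.ext_iff]
            rw [hw]
            refine AddSubmonoid.add_mem _ (ih (a - n, b + m) (by simp; linarith) ?_ ?_)
              (AddSubmonoid.subset_closure hg)
            · simp only
              nlinarith [h2]
            · simp only
              push_cast at h3 ⊢
              nlinarith [hn]
          · -- hard case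
            push_neg at hc hs ht
            have ha1 : 1 ≤ a := by
              rcases lt_or_ge a 1 with h | h
              · exfalso; have : a = 0 := by omega
                rw [this] at hc hs; linarith
              · exact h
            obtain ⟨a', h1', h2', h3', h4'⟩ := keylem m n a hn hgcd ha1 ht
            have hr0 : (m * a) % n = m * a + n * b := by
              have e1 : (m * a) % n = (m * a + n * b) % n := by
                rw [Int.add_mul_emod_self_left]
              rw [e1, Int.emod_eq_of_lt h2 hs]
            set c := (m * a') % n with hc'
            set b' := -(m * a' / n) with hb'
            have hceq : m * a' + n * b' = c := by
              have := Int.mul_ediv_add_emod (m * a') n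
              rw [hb']; linarith
            have hc0 : 0 ≤ c := Int.emod_nonneg _ (ne_of_gt hn)
            have hg : ((a', b') : ℤ × ℤ) ∈ {p : ℤ × ℤ | ∃ s t : ℚ, 0 ≤ s ∧ 0 ≤ t ∧ s + t ≤ 1 ∧
                ((p.1 : ℚ), (p.2 : ℚ)) = s • ((0 : ℚ), (1 : ℚ)) + t • ((n : ℚ), (-m : ℚ))} :=
              mem_gen m n hn a' b' (by linarith) (by rw [hceq]; exact hc0) (by rw [hceq]; linarith)
            have hw : ((a, b) : ℤ × ℤ) = (a - a', b - b') + (a', b') := by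
              simp [Prod.ext_iff]
            rw [hw]
            refine AddSubmonoid.add_mem _ (ih (a - a', b - b') (by simp; linarith) ?_ ?_)
              (AddSubmonoid.subset_closure hg)
            · simp only
              have e : m * (a - a') + n * (b - b') = (m * a + n * b) - (m * a' + n * b') := by ring
              rw [e, hceq]
              rw [hr0] at h3'
              linarith
            · simp only
              have e : m * (a - a') + n * (b - b') = (m * a + n * b) - (m * a' + n * b') := by ring
              rw [e, hceq]
              push_cast at h3 ⊢
              linarith
  intro w h1 h2
  exact key (w.1 + (m * w.1 + n * w.2)).toNat w h1 h2 (Int.self_le_toNat _)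
end

section
/- Let m, n ∈ ℤ with n > 0 and gcd(|m|, n) = 1. Let P = {s·(0,1) + t·(n,−m) : s, t ∈ ℚ, 0 ≤ s ≤ 1, 0 ≤ t ≤ 1}, let T = {s·(0,1) + t·(n,−m) : s, t ∈ ℚ, s ≥ 0, t ≥ 0, s + t ≤ 1}, and let w = (0,1) + (n,−m) = (n, 1−m). Then every lattice point v ∈ P ∩ ℤ² with v ≠ w can be written as v = t₁ + t₂ with t₁, t₂ ∈ T ∩ ℤ². -/
private lemma key_nat (n m' : ℕ) (hn : 0 < n) (a : ℕ) (ha : a ≤ n)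
    (hfa : n + 1 ≤ a + (a * m') % n) :
    ∃ b, b ≤ a ∧ b + (b * m') % n ≤ n ∧ (a - b) + ((a - b) * m') % n ≤ n := by
  by_contra hcon
  push_neg at hcon
  set f : ℕ → ℕ := fun x => x + (x * m') % n with hf
  have hsub : ∀ x y, f x + f y ≤ f (x + y) + n := by
    intro x y
    have h1 : ((x + y) * m') % n = ((x * m') % n + (y * m') % n) % n := by
      rw [add_mul, Nat.add_mod]
    have h2 : (x * m') % n < n := Nat.mod_lt _ hn
    have h3 : (y * m') % n < n := Nat.mod_lt _ hn
    rcases lt_or_ge ((x * m') % n + (y * m') % n) n with h | h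
    · simp only [hf]
      rw [h1, Nat.mod_eq_of_lt h]
      omega
    · have h4 : ((x * m') % n + (y * m') % n) % n
          = (x * m') % n + (y * m') % n - n := by
        rw [Nat.mod_eq_sub_mod h, Nat.mod_eq_of_lt (by omega)]
      simp only [hf]
      rw [h1, h4]
      omega
  have hfa' : n + 1 ≤ f a := hfa
  have hf0 : f 0 = 0 := by simp [hf]
  have hapos : 0 < a := by
    rcases Nat.eq_zero_or_pos a with h | h
    · rw [h, hf0] at hfa'; omega
    · exact h
  have hP : ∃ c, 0 < c ∧ n + 1 ≤ f c := ⟨a, hapos, hfa'⟩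
  obtain ⟨hc₀pos, hc₀f⟩ := Nat.find_spec hP
  set c₀ := Nat.find hP with hc₀def
  have hb₀le : Nat.findGreatest (fun b => f b ≤ n) a ≤ a := Nat.findGreatest_le a
  have hb₀P : f (Nat.findGreatest (fun b => f b ≤ n) a) ≤ n :=
    Nat.findGreatest_spec (P := fun b => f b ≤ n) (Nat.zero_le a)
      (by show f 0 ≤ n; rw [hf0]; exact Nat.zero_le n)
  set b₀ := Nat.findGreatest (fun b => f b ≤ n) a with hb₀def
  have hmax : ∀ w, b₀ < w → w ≤ a → n + 1 ≤ f w := by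
    intro w h1 h2
    have := Nat.findGreatest_is_greatest (P := fun b => f b ≤ n) h1 h2
    omega
  have hab₀ : n + 1 ≤ f (a - b₀) := by
    have := hcon b₀ hb₀le hb₀P
    simp only [hf]
    omega
  have hab₀pos : 0 < a - b₀ := by
    rcases Nat.eq_zero_or_pos (a - b₀) with h | h
    · rw [h, hf0] at hab₀; omega
    · exact h
  have hc₀le : c₀ ≤ a - b₀ := Nat.find_le ⟨hab₀pos, hab₀⟩
  have hbc : b₀ + c₀ ≤ a := by omega
  have main : ∀ w, b₀ + 1 ≤ w → w ≤ n → n + 1 ≤ f w := by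
    intro w
    induction w using Nat.strong_induction_on with
    | _ w ih =>
      intro hw1 hw2
      rcases le_or_gt w (b₀ + c₀) with h | h
      · exact hmax w (by omega) (by omega)
      · have hu1 : b₀ + 1 ≤ w - c₀ := by omega
        have hu2 : w - c₀ ≤ n := by omega
        have hu3 : w - c₀ < w := by omega
        have ihu := ih (w - c₀) hu3 hu1 hu2
        have := hsub (w - c₀) c₀
        rw [Nat.sub_add_cancel (by omega)] at this
        omega
  have hfn : f n = n := by simp [hf, Nat.mul_mod_right]
  have hb₀n : b₀ + 1 ≤ n := by omega
  have := main n hb₀n le_rfl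
  omega

private lemma mem_T (m n : ℤ) (hn : 0 < n) (p : ℤ × ℤ) (h1 : 0 ≤ p.1)
    (h2 : 0 ≤ n * p.2 + m * p.1) (h3 : p.1 + (n * p.2 + m * p.1) ≤ n) :
    ∃ s t : ℚ, 0 ≤ s ∧ 0 ≤ t ∧ s + t ≤ 1 ∧
      ((p.1 : ℚ), (p.2 : ℚ)) = s • ((0 : ℚ), (1 : ℚ)) + t • ((n : ℚ), (-m : ℚ)) := by
  have hn' : (0 : ℚ) < (n : ℚ) := by exact_mod_cast hn
  have hnne : (n : ℚ) ≠ 0 := ne_of_gt hn'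
  refine ⟨((n * p.2 + m * p.1 : ℤ) : ℚ) / n, ((p.1 : ℤ) : ℚ) / n, ?_, ?_, ?_, ?_⟩
  · apply div_nonneg _ hn'.le
    exact_mod_cast h2
  · apply div_nonneg _ hn'.le
    exact_mod_cast h1
  · rw [← add_div, div_le_one hn']
    have h3' : ((p.1 + (n * p.2 + m * p.1) : ℤ) : ℚ) ≤ ((n : ℤ) : ℚ) := by
      exact_mod_cast h3
    push_cast at h3' ⊢
    linarith
  · have := hnne
    apply Prod.ext
    · simp only [Prod.fst_add, Prod.smul_fst, smul_eq_mul]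
      field_simp
      ring
    · simp only [Prod.snd_add, Prod.smul_snd, smul_eq_mul]
      field_simp
      push_cast
      ring

/-- Let `m n : ℤ` with `n > 0` and `gcd(|m|,n) = 1`. Let `P` be the parallelogram spanned
by `(0,1)` and `(n,−m)`, `T` the triangle with vertices `(0,0)`, `(0,1)`, `(n,−m)`, and
`w = (n, 1−m)` the vertex of `P` opposite the origin. Then every lattice point
`v ∈ P ∩ ℤ²` with `v ≠ w` can be written as `v = t₁ + t₂` with `t₁, t₂ ∈ T ∩ ℤ²`. -/
theorem stmt8 (m n : ℤ) (hn : 0 < n) (hgcd : Int.gcd m n = 1) (v : ℤ × ℤ)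
    (hvP : ∃ s t : ℚ, 0 ≤ s ∧ s ≤ 1 ∧ 0 ≤ t ∧ t ≤ 1 ∧
      ((v.1 : ℚ), (v.2 : ℚ)) = s • ((0 : ℚ), (1 : ℚ)) + t • ((n : ℚ), (-m : ℚ)))
    (hvw : v ≠ (n, 1 - m)) :
    ∃ t₁ t₂ : ℤ × ℤ,
      (∃ s t : ℚ, 0 ≤ s ∧ 0 ≤ t ∧ s + t ≤ 1 ∧
        ((t₁.1 : ℚ), (t₁.2 : ℚ)) = s • ((0 : ℚ), (1 : ℚ)) + t • ((n : ℚ), (-m : ℚ))) ∧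
      (∃ s t : ℚ, 0 ≤ s ∧ 0 ≤ t ∧ s + t ≤ 1 ∧
        ((t₂.1 : ℚ), (t₂.2 : ℚ)) = s • ((0 : ℚ), (1 : ℚ)) + t • ((n : ℚ), (-m : ℚ))) ∧
      v = t₁ + t₂ := by
  obtain ⟨s, t, hs0, hs1, ht0, ht1, heq⟩ := hvP
  have hn' : (0 : ℚ) < (n : ℚ) := by exact_mod_cast hn
  have hnne : (n : ℚ) ≠ 0 := ne_of_gt hn'
  have h1 : (v.1 : ℚ) = t * n := by
    have := congrArg Prod.fst heq
    simp only [Prod.fst_add, Prod.smul_fst, smul_eq_mul] at this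
    rw [this]; ring
  have h2 : (v.2 : ℚ) = s - t * m := by
    have := congrArg Prod.snd heq
    simp only [Prod.snd_add, Prod.smul_snd, smul_eq_mul] at this
    rw [this]; ring
  set a : ℤ := v.1 with hadef
  set e : ℤ := n * v.2 + m * v.1 with hedef
  have hecast : (e : ℚ) = n * s := by
    rw [hedef]
    push_cast
    rw [h1, h2]
    ring
  have ha0 : 0 ≤ a := by
    have : (0 : ℚ) ≤ (a : ℚ) := by rw [hadef, h1]; positivity
    exact_mod_cast this
  have han : a ≤ n := by
    have : (a : ℚ) ≤ (n : ℚ) := by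
      rw [hadef, h1]
      nlinarith
    exact_mod_cast this
  have he0 : 0 ≤ e := by
    have : (0 : ℚ) ≤ (e : ℚ) := by rw [hecast]; positivity
    exact_mod_cast this
  have hen : e ≤ n := by
    have : (e : ℚ) ≤ (n : ℚ) := by rw [hecast]; nlinarith
    exact_mod_cast this
  rcases le_or_gt (a + e) n with hcase | hcase
  · -- v itself is in T; write v = v + 0
    refine ⟨v, 0, ?_, ?_, by simp⟩
    · exact mem_T m n hn v ha0 (by rw [← hedef]; exact he0) (by rw [← hedef, ← hadef]; exact hcase)
    · exact mem_T m n hn 0 (by simp) (by simp) (by simp; omega)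
  · -- hard case
    have han' : a ≤ n - 1 := by
      by_contra h
      have haeq : a = n := by omega
      have hdvd : n ∣ e := ⟨v.2 + m, by rw [hedef, ← hadef, haeq]; ring⟩
      have he1 : 1 ≤ e := by omega
      have heeq : e = n := by
        rcases hdvd with ⟨k, hk⟩
        have hk1 : k = 1 := by nlinarith
        rw [hk, hk1, mul_one]
      have h10 : n * (v.2 + m - 1) = 0 := by
        have h11 : n * (v.2 + m - 1) = e - n := by
          rw [hedef, ← hadef, haeq]; ring
        rw [h11, heeq]; ring
      have h12 : v.2 + m - 1 = 0 := by
        rcases mul_eq_zero.mp h10 with h' | h'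
        · omega
        · exact h'
      exact hvw (Prod.ext (by rw [← hadef, haeq]) (by omega))
    have ha1 : 1 ≤ a := by omega
    have hen' : e ≤ n - 1 := by
      by_contra h
      have heeq : e = n := by omega
      have hdvd : n ∣ a * m := ⟨1 - v.2, by
        have : a * m = e - n * v.2 := by rw [hedef, hadef]; ring
        rw [this, heeq]; ring⟩
      have hgcd' : Int.gcd n m = 1 := by rwa [Int.gcd_comm]
      have hna : n ∣ a := (Int.isCoprime_iff_gcd_eq_one.mpr hgcd').dvd_of_dvd_mul_right hdvd
      have := Int.le_of_dvd (by omega) hna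
      omega
    -- move to ℕ
    set m' : ℤ := m % n with hm'def
    have hm'0 : 0 ≤ m' := Int.emod_nonneg m (by omega)
    have hm'n : m' < n := Int.emod_lt_of_pos m hn
    have hemod : e = (a * m') % n := by
      have h5 : (a * m') % n = (a * m) % n := by
        rw [hm'def, Int.mul_emod, Int.emod_emod_of_dvd m dvd_rfl, ← Int.mul_emod]
      have h6 : (a * m) % n = e % n := by
        have h6' : a * m ≡ e [ZMOD n] :=
          (Int.modEq_iff_dvd.mpr ⟨v.2, by rw [hedef, hadef]; ring⟩)
        exact h6'
      have h7 : e % n = e := Int.emod_eq_of_lt he0 (by omega)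
      rw [h5, h6, h7]
    set N : ℕ := n.toNat with hNdef
    set A : ℕ := a.toNat with hAdef
    set M : ℕ := m'.toNat with hMdef
    have hNc : (N : ℤ) = n := Int.toNat_of_nonneg hn.le
    have hAc : (A : ℤ) = a := Int.toNat_of_nonneg ha0
    have hMc : (M : ℤ) = m' := Int.toNat_of_nonneg hm'0
    have hNpos : 0 < N := by omega
    have hAN : A ≤ N := by omega
    have hmodc : ∀ x : ℕ, (((x * M) % N : ℕ) : ℤ) = ((x : ℤ) * m') % n := by
      intro x
      push_cast [hNc, hMc]
      ring_nf
    have hfa : N + 1 ≤ A + (A * M) % N := by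
      have h8 : (((A * M) % N : ℕ) : ℤ) = e := by rw [hmodc, hAc, ← hemod]
      omega
    obtain ⟨B, hBA, hB1, hB2⟩ := key_nat N M hNpos A hAN hfa
    set b : ℤ := (B : ℤ) with hbdef
    have hb0 : 0 ≤ b := Int.natCast_nonneg B
    have hba : b ≤ a := by omega
    set d1 : ℤ := (((B * M) % N : ℕ) : ℤ) with hd1def
    set d2 : ℤ := ((((A - B) * M) % N : ℕ) : ℤ) with hd2def
    have hd10 : 0 ≤ d1 := Int.natCast_nonneg _
    have hd20 : 0 ≤ d2 := Int.natCast_nonneg _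
    have hABc : (((A - B : ℕ)) : ℤ) = a - b := by
      push_cast [Nat.cast_sub hBA]
      omega
    have hfb : b + d1 ≤ n := by
      have : ((B + (B * M) % N : ℕ) : ℤ) ≤ (N : ℤ) := by exact_mod_cast hB1
      push_cast at this
      omega
    have hfab : (a - b) + d2 ≤ n := by
      have : (((A - B) + ((A - B) * M) % N : ℕ) : ℤ) ≤ (N : ℤ) := by exact_mod_cast hB2
      push_cast [Nat.cast_sub hBA] at this
      omega
    have hd1mod : d1 = (b * m') % n := by rw [hd1def, hmodc]
    have hd2mod : d2 = ((a - b) * m') % n := by rw [hd2def, hmodc, hABc]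
    have hd1n : d1 < n := by rw [hd1mod]; exact Int.emod_lt_of_pos _ (by omega)
    have hd2n : d2 < n := by rw [hd2mod]; exact Int.emod_lt_of_pos _ (by omega)
    -- d1 + d2 = e
    have hdvd1 : n ∣ d1 - b * m' := by
      refine ⟨-((b * m') / n), ?_⟩
      rw [hd1mod, Int.emod_def]; ring
    have hdvd2 : n ∣ d2 - (a - b) * m' := by
      refine ⟨-(((a - b) * m') / n), ?_⟩
      rw [hd2mod, Int.emod_def]; ring
    have hdvde : n ∣ e - a * m' := by
      refine ⟨-((a * m') / n), ?_⟩
      rw [hemod, Int.emod_def]; ring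
    have hdvd12 : n ∣ (d1 + d2) - e := by
      have : (d1 + d2) - e = (d1 - b * m') + (d2 - (a - b) * m') - (e - a * m') := by ring
      rw [this]
      exact dvd_sub (dvd_add hdvd1 hdvd2) hdvde
    have hd12 : d1 + d2 = e := by
      obtain ⟨k, hk⟩ := hdvd12
      rcases lt_trichotomy k 0 with hkc | hkc | hkc
      · exfalso
        have hb1' : n * k ≤ n * (-1) := by
          apply mul_le_mul_of_nonneg_left (by omega) hn.le
        have hb2' : n * (-1) = -n := by ring
        linarith
      · rw [hkc, mul_zero] at hk; omega
      · exfalso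
        have hb1' : n * 1 ≤ n * k := by
          apply mul_le_mul_of_nonneg_left (by omega) hn.le
        have hb2' : n * 1 = n := by ring
        linarith
    -- construct the two points
    have hdvdc : n ∣ d1 - m * b := by
      have h9 : n ∣ m' - m := ⟨-(m / n), by rw [hm'def, Int.emod_def]; ring⟩
      have : d1 - m * b = (d1 - b * m') + b * (m' - m) := by ring
      rw [this]
      exact dvd_add hdvd1 (Dvd.dvd.mul_left h9 b)
    set c : ℤ := (d1 - m * b) / n with hcdef
    have hc : n * c = d1 - m * b := Int.mul_ediv_cancel' hdvdc
    refine ⟨(b, c), (a - b, v.2 - c), ?_, ?_, ?_⟩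
    · exact mem_T m n hn (b, c) hb0 (by simp only; omega) (by simp only; omega)
    · have he2 : n * (v.2 - c) + m * (a - b) = d2 := by
        have : n * v.2 = e - m * a := by rw [hedef, hadef]; ring
        rw [mul_sub, this, hc]
        linear_combination -hd12
      exact mem_T m n hn (a - b, v.2 - c) (by simp only; omega)
        (by simp only; rw [he2]; omega) (by simp only; rw [he2]; omega)
    · apply Prod.ext
      · simp only [Prod.fst_add]
        rw [hadef] at *
        omega
      · simp only [Prod.snd_add]
        ring
end

section
/- Let F be a field, let n, t ≥ 1, and let u₁, ..., u_t ∈ ℤⁿ. Let φ : F[y₁,...,y_t] → F[ℤⁿ] be the F-algebra homomorphism from the polynomial ring in t variables to the group algebra of ℤⁿ over F (the Laurent polynomial ring in n variables) sending yᵢ to the monomial X^{uᵢ}. Then the kernel of φ is the ideal generated by the binomials y₁^{a₁}···y_t^{a_t} − y₁^{b₁}···y_t^{b_t}, where a₁,...,a_t, b₁,...,b_t range over nonnegative integers satisfying a₁u₁ + ... + a_t u_t = b₁u₁ + ... + b_t u_t in ℤⁿ. -/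
open MvPolynomial

namespace Stmt9

variable {F : Type} [Field F] {n t : ℕ}

noncomputable abbrev phi (u : Fin t → (Fin n → ℤ)) :
    MvPolynomial (Fin t) F →ₐ[F] AddMonoidAlgebra F (Fin n → ℤ) :=
  aeval (fun i => AddMonoidAlgebra.of' F (Fin n → ℤ) (u i))

abbrev A (u : Fin t → Fin n → ℤ) (a : Fin t → ℕ) : Fin n → ℤ := ∑ i, (a i : ℤ) • u i

lemma phi_monomial (u : Fin t → (Fin n → ℤ)) (d : Fin t →₀ ℕ) (c : F) :
    phi u (monomial d c) = AddMonoidAlgebra.single (A u ⇑d) c := by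
  rw [aeval_monomial]
  simp only [AddMonoidAlgebra.of'_apply, AddMonoidAlgebra.single_pow, one_pow]
  rw [Finsupp.prod_fintype]
  · rw [AddMonoidAlgebra.prod_single]
    simp [algebraMap_eq, A,
      Nat.cast_smul_eq_nsmul, AddMonoidAlgebra.single_mul_single]
  · intro i; simp [AddMonoidAlgebra.one_def]

end Stmt9

namespace Stmt9b
open Stmt9

variable {F : Type} [Field F] {n t : ℕ}

lemma phi_apply (u : Fin t → (Fin n → ℤ)) (p : MvPolynomial (Fin t) F) :
    phi u p = ∑ d ∈ p.support, AddMonoidAlgebra.single (A u ⇑d) (coeff d p) := by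
  conv_lhs => rw [p.as_sum]
  rw [map_sum]
  exact Finset.sum_congr rfl fun d _ => phi_monomial u d _

lemma phi_coeff (u : Fin t → (Fin n → ℤ)) (p : MvPolynomial (Fin t) F) (v : Fin n → ℤ) :
    (phi u p).coeff v = ∑ d ∈ p.support, (if A u ⇑d = v then coeff d p else 0) := by
  rw [phi_apply, AddMonoidAlgebra.coeff_sum, Finsupp.finset_sum_apply]
  exact Finset.sum_congr rfl fun d _ => Finsupp.single_apply

end Stmt9b

section Main
open Stmt9 Stmt9b

variable {F : Type} [Field F] {n t : ℕ}

lemma gen_monomial (u : Fin t → (Fin n → ℤ)) (d : Fin t →₀ ℕ) :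
    (∏ i, (X i : MvPolynomial (Fin t) F) ^ d i) = monomial d 1 := by
  rw [← prod_X_pow_eq_monomial]
  exact (Finset.prod_subset (Finset.subset_univ _) (by
    intro i _ hi
    simp [Finsupp.notMem_support_iff.mp hi])).symm

lemma ker_le (u : Fin t → (Fin n → ℤ)) :
    ∀ N (p : MvPolynomial (Fin t) F), p.support.card ≤ N → phi u p = 0 →
      p ∈ Ideal.span {p : MvPolynomial (Fin t) F |
        ∃ a b : Fin t → ℕ,
          (∑ i, (a i : ℤ) • u i) = (∑ i, (b i : ℤ) • u i) ∧
          p = (∏ i, MvPolynomial.X i ^ a i) - (∏ i, MvPolynomial.X i ^ b i)} := by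
  intro N
  induction N with
  | zero =>
    intro p h _
    have : p = 0 := by
      have := Finset.card_eq_zero.mp (Nat.le_zero.mp h)
      simpa [MvPolynomial.support_eq_empty] using this
    simp [this]
  | succ N ih =>
    intro p hcard hker
    by_cases h0 : p = 0
    · simp [h0]
    obtain ⟨d, hd⟩ := (MvPolynomial.support_nonempty.mpr h0)
    have hcd : coeff d p ≠ 0 := MvPolynomial.mem_support_iff.mp hd
    have hsum : ∑ d' ∈ p.support, (if A u ⇑d' = A u ⇑d then coeff d' p else 0) = 0 := by
      rw [← phi_coeff, hker]; rfl
    have hsum2 : ∑ d' ∈ p.support.erase d, (if A u ⇑d' = A u ⇑d then coeff d' p else 0)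
        = - coeff d p := by
      have := Finset.add_sum_erase p.support
        (fun d' : Fin t →₀ ℕ => if A u ⇑d' = A u ⇑d then coeff d' p else 0) hd
      rw [← this] at hsum
      simp only [if_pos rfl] at hsum
      exact eq_neg_of_add_eq_zero_right hsum
    have hex : ∃ d' ∈ p.support.erase d, A u ⇑d' = A u ⇑d := by
      by_contra hc
      push_neg at hc
      rw [Finset.sum_eq_zero (fun d' hd' => if_neg (hc d' hd'))] at hsum2
      exact hcd (neg_eq_zero.mp hsum2.symm)
    obtain ⟨d', hd'mem, hAd'⟩ := hex
    have hd'ne : d' ≠ d := Finset.ne_of_mem_erase hd'mem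
    have hd'supp : d' ∈ p.support := Finset.mem_of_mem_erase hd'mem
    set c := coeff d p with hc
    set g : MvPolynomial (Fin t) F := monomial d 1 - monomial d' 1 with hgdef
    have hg_mem : g ∈ Ideal.span {p : MvPolynomial (Fin t) F |
        ∃ a b : Fin t → ℕ,
          (∑ i, (a i : ℤ) • u i) = (∑ i, (b i : ℤ) • u i) ∧
          p = (∏ i, MvPolynomial.X i ^ a i) - (∏ i, MvPolynomial.X i ^ b i)} := by
      apply Ideal.subset_span
      refine ⟨fun i => d i, fun i => d' i, hAd'.symm, ?_⟩
      rw [gen_monomial u d, gen_monomial u d']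
    have hφg : phi u g = 0 := by
      rw [hgdef, map_sub, phi_monomial, phi_monomial, hAd', sub_self]
    set q := p - c • g with hq
    have hqsupp : q.support ⊆ p.support.erase d := by
      intro e he
      have hne : coeff e q ≠ 0 := MvPolynomial.mem_support_iff.mp he
      rw [hq, hgdef] at hne
      simp only [coeff_sub, coeff_smul, coeff_monomial, smul_eq_mul, mul_sub] at hne
      rw [Finset.mem_erase]
      constructor
      · rintro rfl
        exact hne (by simp [if_neg hd'ne, hc])
      · by_contra hes
        have h1 : coeff e p = 0 := MvPolynomial.notMem_support_iff.mp hes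
        have h2 : e ≠ d := by rintro rfl; exact hes hd
        have h3 : e ≠ d' := by rintro rfl; exact hes hd'supp
        simp [h1, if_neg (Ne.symm h2), if_neg (Ne.symm h3)] at hne
    have hqcard : q.support.card ≤ N := by
      calc q.support.card ≤ (p.support.erase d).card := Finset.card_le_card hqsupp
        _ = p.support.card - 1 := Finset.card_erase_of_mem hd
        _ ≤ N := by omega
    have hqker : phi u q = 0 := by
      rw [hq, map_sub, map_smul, hker, hφg, smul_zero, sub_zero]
    have hqmem := ih q hqcard hqker
    have : p = q + c • g := by rw [hq]; ring
    rw [this]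
    refine Ideal.add_mem _ hqmem ?_
    rw [MvPolynomial.smul_eq_C_mul]
    exact Ideal.mul_mem_left _ _ hg_mem

end Main

/-- Let `F` be a field, `u₁, ..., u_t ∈ ℤⁿ`, and let `φ : F[y₁,...,y_t] → F[ℤⁿ]` be the
`F`-algebra homomorphism sending `yᵢ` to the monomial `X^{uᵢ}` in the group (Laurent)
algebra. Then `ker φ` is the ideal generated by the binomials
`y^a − y^b` with `∑ aᵢ uᵢ = ∑ bᵢ uᵢ`. -/
theorem stmt9 (F : Type) [Field F] (n t : ℕ) (hn : 1 ≤ n) (ht : 1 ≤ t)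
    (u : Fin t → (Fin n → ℤ)) :
    RingHom.ker (MvPolynomial.aeval
        (fun i : Fin t => AddMonoidAlgebra.of' F (Fin n → ℤ) (u i)) :
        MvPolynomial (Fin t) F →ₐ[F] AddMonoidAlgebra F (Fin n → ℤ)).toRingHom =
      Ideal.span {p : MvPolynomial (Fin t) F |
        ∃ a b : Fin t → ℕ,
          (∑ i, (a i : ℤ) • u i) = (∑ i, (b i : ℤ) • u i) ∧
          p = (∏ i, MvPolynomial.X i ^ a i) - (∏ i, MvPolynomial.X i ^ b i)} := by
  have key : ∀ a : Fin t → ℕ, (Stmt9.phi u (∏ i, X i ^ a i) : AddMonoidAlgebra F (Fin n → ℤ)) =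
      AddMonoidAlgebra.single (∑ i, (a i : ℤ) • u i) 1 := by
    intro a
    have h1 : (∏ i, (X i : MvPolynomial (Fin t) F) ^ a i)
        = monomial (Finsupp.equivFunOnFinite.symm a) 1 := by
      rw [← gen_monomial u (Finsupp.equivFunOnFinite.symm a)]
      simp
    rw [h1, Stmt9.phi_monomial]
    simp [Stmt9.A]
  apply le_antisymm
  · intro p hp
    rw [RingHom.mem_ker] at hp
    exact ker_le u p.support.card p le_rfl hp
  · rw [Ideal.span_le]
    rintro p ⟨a, b, hab, rfl⟩
    simp only [SetLike.mem_coe, RingHom.mem_ker]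
    show Stmt9.phi u _ = 0
    rw [map_sub, key a, key b, hab, sub_self]
end

section
/- Let F be a field and let φ : F[y₁, y₂, y₃] → F[x₁, x₂] be the F-algebra homomorphism with φ(y₁) = x₁, φ(y₂) = x₁²x₂³, and φ(y₃) = x₁x₂. Then the kernel of φ is the ideal generated by the single binomial y₁y₂ − y₃³. -/
/-!
A monomial map `yᵢ ↦ x ^ vᵢ` acts on polynomials as `mapDomain` along the exponent map
`e ↦ ∑ eᵢ vᵢ`; here `v = ((1,0), (2,3), (1,1))`, and the relation `(1,0) + (2,3) = 3 • (1,1)`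
puts `y₁y₂ − y₃³` in the kernel. Trading `y₁y₂` for `y₃³` reduces every monomial,
modulo the binomial, to one with no `y₁` or no `y₂`, and the exponent map is injective on such
exponents. So a polynomial in the kernel is congruent to a reduced one that is still in the
kernel, and the latter vanishes.
-/

open MvPolynomial

section MonomialMap

variable {σ τ R : Type*}

theorem aeval_monomial_eq_mapDomain [CommSemiring R] (v : σ → τ →₀ ℕ) (p : MvPolynomial σ R) :
    aeval (fun i => monomial (v i) (1 : R)) p =
      AddMonoidAlgebra.mapDomain (Finsupp.linearCombination ℕ v) p := by
  have : aeval (fun i => monomial (v i) (1 : R)) =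
      AddMonoidAlgebra.mapDomainAlgHom R R (Finsupp.linearCombination ℕ v).toAddMonoidHom := by
    refine algHom_ext fun i => ?_
    rw [aeval_X, AddMonoidAlgebra.mapDomainAlgHom_apply, X]
    simp [← single_eq_monomial]
  rw [this]
  rfl

theorem eq_zero_of_aeval_monomial_eq_zero [CommSemiring R] {v : σ → τ →₀ ℕ}
    {S : Set (σ →₀ ℕ)} (hS : S.InjOn (Finsupp.linearCombination ℕ v)) {p : MvPolynomial σ R}
    (hp : ↑p.support ⊆ S) (h : aeval (fun i => monomial (v i) (1 : R)) p = 0) : p = 0 := by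
  rw [aeval_monomial_eq_mapDomain] at h
  have h' := congrArg AddMonoidAlgebra.coeff h
  simp only [AddMonoidAlgebra.coeff_mapDomain, AddMonoidAlgebra.coeff_zero] at h'
  exact AddMonoidAlgebra.coeff_eq_zero.mp <|
    Finsupp.mapDomain_injOn S hS hp (by simp) (h'.trans Finsupp.mapDomain_zero.symm)

theorem support_mapDomain_subset_range [CommSemiring R] (f : (σ →₀ ℕ) → σ →₀ ℕ)
    (p : MvPolynomial σ R) : ↑(support (AddMonoidAlgebra.mapDomain f p)) ⊆ Set.range f := by
  classical
  intro e he
  obtain ⟨d, -, rfl⟩ := Finset.mem_image.mp (Finsupp.mapDomain_support he)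
  exact Set.mem_range_self d

theorem sub_mapDomain_mem [CommRing R] {I : Ideal (MvPolynomial σ R)}
    {f : (σ →₀ ℕ) → σ →₀ ℕ} (hf : ∀ e c, monomial e c - monomial (f e) c ∈ I)
    (p : MvPolynomial σ R) : p - AddMonoidAlgebra.mapDomain f p ∈ I := by
  induction p using MvPolynomial.induction_on' with
  | monomial e c => simpa [← single_eq_monomial] using hf e c
  | add p q hp hq =>
    rw [AddMonoidAlgebra.mapDomain_add, add_sub_add_comm]
    exact I.add_mem hp hq

theorem ker_aeval_monomial_eq [CommRing R] {v : σ → τ →₀ ℕ} {I : Ideal (MvPolynomial σ R)}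
    (f : (σ →₀ ℕ) → σ →₀ ℕ)
    (hI : I ≤ RingHom.ker (aeval fun i => monomial (v i) (1 : R)).toRingHom)
    (hf : ∀ e c, monomial e c - monomial (f e) c ∈ I)
    (hv : (Set.range f).InjOn (Finsupp.linearCombination ℕ v)) :
    RingHom.ker (aeval fun i => monomial (v i) (1 : R)).toRingHom = I := by
  refine le_antisymm (fun p hp => ?_) hI
  have hpq := sub_mapDomain_mem hf p
  have hq : AddMonoidAlgebra.mapDomain f p = 0 := by
    refine eq_zero_of_aeval_monomial_eq_zero hv (support_mapDomain_subset_range f p) ?_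
    have hφ := RingHom.mem_ker.mp (hI hpq)
    rwa [map_sub, RingHom.mem_ker.mp hp, zero_sub, neg_eq_zero] at hφ
  simpa [hq] using hpq

end MonomialMap

noncomputable def semigroupGenerators : Fin 3 → Fin 2 →₀ ℕ :=
  ![Finsupp.single 0 1, Finsupp.single 0 2 + Finsupp.single 1 3,
    Finsupp.single 0 1 + Finsupp.single 1 1]

theorem monomial_semigroupGenerators (R : Type*) [CommSemiring R] :
    (![X 0, X 0 ^ 2 * X 1 ^ 3, X 0 * X 1] : Fin 3 → MvPolynomial (Fin 2) R) =
      fun i => monomial (semigroupGenerators i) 1 := by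
  funext i
  fin_cases i <;> simp [semigroupGenerators, X, monomial_pow, monomial_mul]

theorem semigroupGenerators_add : semigroupGenerators 0 + semigroupGenerators 1 =
    3 • semigroupGenerators 2 := by
  ext i
  fin_cases i <;> simp [semigroupGenerators]

theorem linearCombination_semigroupGenerators_apply_zero (e : Fin 3 →₀ ℕ) :
    Finsupp.linearCombination ℕ semigroupGenerators e 0 = e 0 + 2 * e 1 + e 2 := by
  simp [Finsupp.linearCombination_apply, Finsupp.sum_fintype, Fin.sum_univ_three,
    semigroupGenerators, mul_comm]

theorem linearCombination_semigroupGenerators_apply_one (e : Fin 3 →₀ ℕ) :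
    Finsupp.linearCombination ℕ semigroupGenerators e 1 = 3 * e 1 + e 2 := by
  simp [Finsupp.linearCombination_apply, Finsupp.sum_fintype, Fin.sum_univ_three,
    semigroupGenerators, mul_comm]

theorem semigroupGenerators_injOn :
    {e : Fin 3 →₀ ℕ | e 0 = 0 ∨ e 1 = 0}.InjOn
      (Finsupp.linearCombination ℕ semigroupGenerators) := by
  intro e he d hd h
  have h0 := DFunLike.congr_fun h 0
  have h1 := DFunLike.congr_fun h 1
  rw [linearCombination_semigroupGenerators_apply_zero,
    linearCombination_semigroupGenerators_apply_zero] at h0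
  rw [linearCombination_semigroupGenerators_apply_one,
    linearCombination_semigroupGenerators_apply_one] at h1
  obtain ⟨h₀, h₁, h₂⟩ : e 0 = d 0 ∧ e 1 = d 1 ∧ e 2 = d 2 := by
    simp only [Set.mem_ofPred_eq] at he hd
    omega
  ext i
  fin_cases i
  exacts [h₀, h₁, h₂]

noncomputable def reduceExponent (e : Fin 3 →₀ ℕ) : Fin 3 →₀ ℕ :=
  Finsupp.single 0 (e 0 - min (e 0) (e 1)) + Finsupp.single 1 (e 1 - min (e 0) (e 1)) +
    Finsupp.single 2 (e 2 + 3 * min (e 0) (e 1))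

theorem reduceExponent_eq_zero (e : Fin 3 →₀ ℕ) :
    reduceExponent e 0 = 0 ∨ reduceExponent e 1 = 0 := by
  have : e 0 - min (e 0) (e 1) = 0 ∨ e 1 - min (e 0) (e 1) = 0 := by omega
  simpa [reduceExponent] using this

theorem monomial_sub_monomial_reduceExponent_mem {R : Type*} [CommRing R] (e : Fin 3 →₀ ℕ)
    (c : R) : monomial e c - monomial (reduceExponent e) c ∈
      Ideal.span {X 0 * X 1 - X 2 ^ 3} := by
  set k := min (e 0) (e 1) with hk
  obtain ⟨a, ha⟩ : ∃ a, e 0 = a + k := ⟨e 0 - k, by omega⟩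
  obtain ⟨b, hb⟩ : ∃ b, e 1 = b + k := ⟨e 1 - k, by omega⟩
  have hr : reduceExponent e =
      Finsupp.single 0 a + Finsupp.single 1 b + Finsupp.single 2 (e 2 + 3 * k) := by
    rw [reduceExponent, ← hk, ha, hb, Nat.add_sub_cancel, Nat.add_sub_cancel]
  have : monomial e c - monomial (reduceExponent e) c =
      C c * X 0 ^ a * X 1 ^ b * X 2 ^ e 2 * ((X 0 * X 1) ^ k - (X 2 ^ 3) ^ k) := by
    rw [hr, monomial_eq, monomial_eq, Finsupp.prod_fintype _ _ fun _ => pow_zero _,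
      Finsupp.prod_fintype _ _ fun _ => pow_zero _, Fin.prod_univ_three, Fin.prod_univ_three]
    simp only [ha, hb, Finsupp.add_apply, Finsupp.single_apply, Fin.reduceEq, if_true,
      if_false, add_zero, zero_add]
    ring
  rw [this, Ideal.mem_span_singleton]
  exact (sub_dvd_pow_sub_pow _ _ k).mul_left _

/-- Let `F` be a field and `φ : F[y₁,y₂,y₃] → F[x₁,x₂]` the `F`-algebra homomorphism with
`φ(y₁) = x₁`, `φ(y₂) = x₁²x₂³`, `φ(y₃) = x₁x₂`. Then `ker φ = (y₁y₂ − y₃³)`. -/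
theorem stmt10 (F : Type) [Field F] :
    RingHom.ker (MvPolynomial.aeval
        (![MvPolynomial.X 0,
           MvPolynomial.X 0 ^ 2 * MvPolynomial.X 1 ^ 3,
           MvPolynomial.X 0 * MvPolynomial.X 1] :
          Fin 3 → MvPolynomial (Fin 2) F) :
        MvPolynomial (Fin 3) F →ₐ[F] MvPolynomial (Fin 2) F).toRingHom =
      Ideal.span {MvPolynomial.X 0 * MvPolynomial.X 1 - MvPolynomial.X 2 ^ 3} := by
  rw [monomial_semigroupGenerators]
  have hI : Ideal.span {(X 0 * X 1 - X 2 ^ 3 : MvPolynomial (Fin 3) F)} ≤ RingHom.ker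
      (aeval fun i => monomial (semigroupGenerators i) (1 : F)).toRingHom := by
    rw [Ideal.span_le, Set.singleton_subset_iff, SetLike.mem_coe, RingHom.mem_ker]
    simp only [AlgHom.toRingHom_eq_coe, RingHom.coe_coe, map_sub, map_mul, map_pow, aeval_X,
      monomial_mul, monomial_pow, mul_one, one_pow, semigroupGenerators_add, sub_self]
  exact ker_aeval_monomial_eq reduceExponent hI monomial_sub_monomial_reduceExponent_mem
    (semigroupGenerators_injOn.mono (Set.range_subset_iff.mpr reduceExponent_eq_zero))
end

section
/- Let F be a field and let φ : F[y₁, y₂, y₃] → F[x₁, x₂] be the F-algebra homomorphism with φ(y₁) = x₁, φ(y₂) = x₁x₂, and φ(y₃) = x₁x₂². Then the kernel of φ is the ideal generated by the single binomial y₁y₃ − y₂². -/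
open MvPolynomial

variable {F : Type} [Field F]

noncomputable def vv (F : Type) [Field F] : Fin 3 → MvPolynomial (Fin 2) F :=
  ![X 0, X 0 * X 1, X 0 * X 1 ^ 2]

noncomputable def A (m : Fin 3 →₀ ℕ) : Fin 2 →₀ ℕ :=
  Finsupp.single 0 (m 0 + m 1 + m 2) + Finsupp.single 1 (m 1 + 2 * m 2)

lemma A_zero (m : Fin 3 →₀ ℕ) : A m 0 = m 0 + m 1 + m 2 := by
  simp [A, Finsupp.single_apply]

lemma A_one (m : Fin 3 →₀ ℕ) : A m 1 = m 1 + 2 * m 2 := by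
  simp [A, Finsupp.single_apply]

lemma phi_monomial (m : Fin 3 →₀ ℕ) (k : F) :
    aeval (vv F) (monomial m k) = monomial (A m) k := by
  rw [aeval_monomial, monomial_eq]
  rw [Finsupp.prod_fintype _ _ (by simp), Finsupp.prod_fintype _ _ (by simp)]
  simp only [Fin.prod_univ_three, Fin.prod_univ_two, A_zero, A_one, vv,
    Matrix.cons_val_zero, Matrix.cons_val_one, Matrix.head_cons, algebraMap_eq,
    Matrix.cons_val_two, Matrix.tail_cons]
  ring

lemma A_inj {m m' : Fin 3 →₀ ℕ} (h1 : m 1 ≤ 1) (h1' : m' 1 ≤ 1) (h : A m = A m') :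
    m = m' := by
  have e0 : m 0 + m 1 + m 2 = m' 0 + m' 1 + m' 2 := by
    have := DFunLike.congr_fun h 0; simpa [A_zero] using this
  have e1 : m 1 + 2 * m 2 = m' 1 + 2 * m' 2 := by
    have := DFunLike.congr_fun h 1; simpa [A_one] using this
  have g1 : m 1 = m' 1 := by omega
  have g2 : m 2 = m' 2 := by omega
  have g0 : m 0 = m' 0 := by omega
  ext i
  fin_cases i
  · exact g0
  · exact g1
  · exact g2

lemma red_mono (b : ℕ) : ∀ (u : Fin 3 →₀ ℕ), u 1 ≤ b → ∀ a : F,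
    ∃ r : MvPolynomial (Fin 3) F,
      (monomial u a) - r ∈ Ideal.span {(X 0 * X 2 - X 1 ^ 2 : MvPolynomial (Fin 3) F)} ∧
      ∀ m ∈ r.support, m 1 ≤ 1 := by
  induction b using Nat.strong_induction_on with
  | _ b ih =>
    intro u hub a
    classical
    by_cases hle : u 1 ≤ 1
    · refine ⟨monomial u a, by simp, fun m hm => ?_⟩
      rw [MvPolynomial.support_monomial] at hm
      split at hm <;> simp_all
    · have h2 : 2 ≤ u 1 := by omega
      set w : Fin 3 →₀ ℕ := u - Finsupp.single 1 2 with hw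
      set u' : Fin 3 →₀ ℕ := w + Finsupp.single 0 1 + Finsupp.single 2 1 with hu'
      have hsplit : w + Finsupp.single 1 2 = u :=
        tsub_add_cancel_of_le (Finsupp.single_le_iff.mpr h2)
      have hu'1 : u' 1 = u 1 - 2 := by
        simp [hu', hw, Finsupp.tsub_apply, Finsupp.add_apply, Finsupp.single_apply]
      have hm1 : (monomial w a : MvPolynomial (Fin 3) F) * X 1 ^ 2 = monomial u a := by
        rw [X_pow_eq_monomial, monomial_mul, mul_one, hsplit]
      have hm2 : (monomial w a : MvPolynomial (Fin 3) F) * (X 0 * X 2) = monomial u' a := by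
        rw [show (X 0 * X 2 : MvPolynomial (Fin 3) F) = X 0 ^ 1 * X 2 ^ 1 by ring,
          X_pow_eq_monomial, X_pow_eq_monomial, ← mul_assoc, monomial_mul, monomial_mul,
          mul_one, mul_one, hu', add_assoc]
      have hkey : (monomial u a : MvPolynomial (Fin 3) F) - monomial u' a
          = (X 0 * X 2 - X 1 ^ 2) * (-(monomial w a)) := by
        rw [← hm1, ← hm2]; ring
      have hb1 : b - 1 < b := by omega
      obtain ⟨r, hr, hs⟩ := ih (b - 1) hb1 u' (by omega) a
      refine ⟨r, ?_, hs⟩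
      have hmem : (monomial u a : MvPolynomial (Fin 3) F) - monomial u' a ∈
          Ideal.span {(X 0 * X 2 - X 1 ^ 2 : MvPolynomial (Fin 3) F)} :=
        Ideal.mem_span_singleton.mpr ⟨-(monomial w a), hkey⟩
      have := Ideal.add_mem _ hmem hr
      convert this using 1
      ring

lemma red (f : MvPolynomial (Fin 3) F) :
    ∃ r : MvPolynomial (Fin 3) F,
      f - r ∈ Ideal.span {(X 0 * X 2 - X 1 ^ 2 : MvPolynomial (Fin 3) F)} ∧
      ∀ m ∈ r.support, m 1 ≤ 1 := by
  induction f using MvPolynomial.induction_on' with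
  | monomial u a => exact red_mono (u 1) u le_rfl a
  | add p q hp hq =>
    obtain ⟨r1, hr1, hs1⟩ := hp
    obtain ⟨r2, hr2, hs2⟩ := hq
    refine ⟨r1 + r2, ?_, fun m hm => ?_⟩
    · have := Ideal.add_mem _ hr1 hr2
      convert this using 1
      ring
    · rcases Finset.mem_union.mp (MvPolynomial.support_add hm) with h | h
      · exact hs1 m h
      · exact hs2 m h

lemma r_eq_zero (r : MvPolynomial (Fin 3) F) (hs : ∀ m ∈ r.support, m 1 ≤ 1)
    (h0 : aeval (vv F) r = 0) : r = 0 := by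
  by_contra hne
  obtain ⟨m₀, hm₀⟩ := (MvPolynomial.support_nonempty.mpr hne)
  have himg : aeval (vv F) r = ∑ m ∈ r.support, monomial (A m) (coeff m r) := by
    conv_lhs => rw [r.as_sum]
    rw [map_sum]
    exact Finset.sum_congr rfl fun m _ => phi_monomial m (coeff m r)
  have hc : coeff (A m₀) (aeval (vv F) r) = coeff m₀ r := by
    rw [himg, MvPolynomial.coeff_sum]
    rw [Finset.sum_eq_single m₀]
    · simp [coeff_monomial]
    · intro m hm hne'
      rw [coeff_monomial, if_neg]
      intro hAm
      exact hne' (A_inj (hs m hm) (hs m₀ hm₀) hAm)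
    · intro h; exact absurd hm₀ h
  rw [h0] at hc
  simp at hc
  exact (MvPolynomial.mem_support_iff.mp hm₀) hc.symm

/-- Let `F` be a field and `φ : F[y₁,y₂,y₃] → F[x₁,x₂]` the `F`-algebra homomorphism with
`φ(y₁) = x₁`, `φ(y₂) = x₁x₂`, `φ(y₃) = x₁x₂²`. Then `ker φ = (y₁y₃ − y₂²)`. -/
theorem stmt11 (F : Type) [Field F] :
    RingHom.ker (MvPolynomial.aeval
        (![MvPolynomial.X 0,
           MvPolynomial.X 0 * MvPolynomial.X 1,
           MvPolynomial.X 0 * MvPolynomial.X 1 ^ 2] :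
          Fin 3 → MvPolynomial (Fin 2) F) :
        MvPolynomial (Fin 3) F →ₐ[F] MvPolynomial (Fin 2) F).toRingHom =
      Ideal.span {MvPolynomial.X 0 * MvPolynomial.X 2 - MvPolynomial.X 1 ^ 2} := by
  have hv : (![MvPolynomial.X 0,
           MvPolynomial.X 0 * MvPolynomial.X 1,
           MvPolynomial.X 0 * MvPolynomial.X 1 ^ 2] :
          Fin 3 → MvPolynomial (Fin 2) F) = vv F := rfl
  rw [hv]
  have hgen : aeval (vv F) (X 0 * X 2 - X 1 ^ 2 : MvPolynomial (Fin 3) F) = 0 := by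
    simp only [map_sub, map_mul, map_pow, aeval_X, vv, Matrix.cons_val_zero,
      Matrix.cons_val_one, Matrix.head_cons, Matrix.cons_val_two, Matrix.tail_cons]
    ring
  apply le_antisymm
  · intro f hf
    have hf0 : aeval (vv F) f = 0 := hf
    obtain ⟨r, hr, hs⟩ := red f
    have hker : ∀ g ∈ Ideal.span {(X 0 * X 2 - X 1 ^ 2 : MvPolynomial (Fin 3) F)},
        aeval (vv F) g = 0 := by
      intro g hg
      obtain ⟨c, rfl⟩ := Ideal.mem_span_singleton.mp hg
      rw [map_mul, hgen, zero_mul]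
    have hr0 : aeval (vv F) r = 0 := by
      have := hker _ hr
      rw [map_sub, hf0] at this
      linear_combination -this
    have : r = 0 := r_eq_zero r hs hr0
    rw [this, sub_zero] at hr
    exact hr
  · rw [Ideal.span_le]
    intro x hx
    rw [Set.mem_singleton_iff] at hx
    subst hx
    exact hgen
end

section
/- Let F be a field and let φ : F[y₁, y₂, y₃] → F[ℤ²] be the F-algebra homomorphism to the group algebra of ℤ² over F (Laurent polynomials in x₁, x₂) with φ(y₁) = x₂⁻¹, φ(y₂) = x₁²x₂³, and φ(y₃) = x₁x₂. Then the kernel of φ is the ideal generated by the single binomial y₁y₂ − y₃². -/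
noncomputable section

namespace Stmt12Aux

open MvPolynomial AddMonoidAlgebra

/-- exponent map on monomials -/
def T (m : Fin 3 →₀ ℕ) : ℤ × ℤ :=
  (2 * (m 1 : ℤ) + (m 2 : ℤ), -(m 0 : ℤ) + 3 * (m 1 : ℤ) + (m 2 : ℤ))

def kmin (m : Fin 3 →₀ ℕ) : ℕ := min (m 0) (m 1)

def base (m : Fin 3 →₀ ℕ) : Fin 3 →₀ ℕ :=
  Finsupp.equivFunOnFinite.symm ![m 0 - kmin m, m 1 - kmin m, m 2]

def N (m : Fin 3 →₀ ℕ) : Fin 3 →₀ ℕ :=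
  Finsupp.equivFunOnFinite.symm ![m 0 - kmin m, m 1 - kmin m, m 2 + 2 * kmin m]

lemma base_apply (m : Fin 3 →₀ ℕ) (i : Fin 3) :
    base m i = ![m 0 - kmin m, m 1 - kmin m, m 2] i := rfl

lemma N_apply (m : Fin 3 →₀ ℕ) (i : Fin 3) :
    N m i = ![m 0 - kmin m, m 1 - kmin m, m 2 + 2 * kmin m] i := rfl

lemma m_eq (m : Fin 3 →₀ ℕ) :
    m = base m + Finsupp.single 0 (kmin m) + Finsupp.single 1 (kmin m) := by
  ext i
  fin_cases i <;>
    simp [base_apply, Finsupp.single_apply, kmin] <;> omega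

lemma N_eq (m : Fin 3 →₀ ℕ) :
    N m = base m + Finsupp.single 2 (2 * kmin m) := by
  ext i
  fin_cases i <;> simp [base_apply, N_apply, Finsupp.single_apply]

lemma N_normal (m : Fin 3 →₀ ℕ) : min (N m 0) (N m 1) = 0 := by
  simp [N_apply, kmin]; omega

lemma T_N (m : Fin 3 →₀ ℕ) : T (N m) = T m := by
  have h0 : kmin m ≤ m 0 := min_le_left _ _
  have h1 : kmin m ≤ m 1 := min_le_right _ _
  simp only [T, N_apply]
  rw [Prod.ext_iff]
  constructor <;> simp <;> omega

lemma T_inj {m m' : Fin 3 →₀ ℕ} (hm : min (m 0) (m 1) = 0)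
    (hm' : min (m' 0) (m' 1) = 0) (h : T m = T m') : m = m' := by
  simp only [T, Prod.mk.injEq] at h
  obtain ⟨h1, h2⟩ := h
  have e0 : m 0 = m' 0 := by omega
  have e1 : m 1 = m' 1 := by omega
  have e2 : m 2 = m' 2 := by omega
  ext i
  fin_cases i
  · exact e0
  · exact e1
  · exact e2

variable (F : Type) [Field F]

def v : Fin 3 → AddMonoidAlgebra F (ℤ × ℤ) :=
  ![AddMonoidAlgebra.of' F (ℤ × ℤ) (0, -1),
    AddMonoidAlgebra.of' F (ℤ × ℤ) (2, 3),
    AddMonoidAlgebra.of' F (ℤ × ℤ) (1, 1)]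

lemma aeval_monomial' (m : Fin 3 →₀ ℕ) (c : F) :
    MvPolynomial.aeval (v F) (monomial m c) = AddMonoidAlgebra.single (T m) c := by
  rw [MvPolynomial.aeval_monomial]
  rw [Finsupp.prod_fintype _ _ (fun i => pow_zero _)]
  rw [Fin.prod_univ_three]
  simp only [v, Matrix.cons_val_zero, Matrix.cons_val_one, Matrix.head_cons,
    Matrix.cons_val_two, Matrix.tail_cons, AddMonoidAlgebra.of'_apply]
  rw [AddMonoidAlgebra.single_pow, AddMonoidAlgebra.single_pow, AddMonoidAlgebra.single_pow]
  rw [AddMonoidAlgebra.single_mul_single, AddMonoidAlgebra.single_mul_single]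
  have : (algebraMap F (AddMonoidAlgebra F (ℤ × ℤ))) c = AddMonoidAlgebra.single 0 c :=
    rfl
  rw [this, AddMonoidAlgebra.single_mul_single]
  congr 1
  · simp [T, Prod.ext_iff]; constructor <;> push_cast <;> ring
  · simp

def I (F : Type) [Field F] : Ideal (MvPolynomial (Fin 3) F) :=
  Ideal.span {MvPolynomial.X 0 * MvPolynomial.X 1 - MvPolynomial.X 2 ^ 2}

lemma monomial_sub_mem (m : Fin 3 →₀ ℕ) :
    (monomial m (1 : F)) - monomial (N m) 1 ∈ I F := by
  have h1 : monomial m (1 : F) = monomial (base m) 1 * ((X 0 * X 1) ^ kmin m) := by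
    rw [mul_pow, X_pow_eq_monomial, X_pow_eq_monomial, monomial_mul, monomial_mul, one_mul,
      one_mul]
    conv_lhs => rw [m_eq m, add_assoc]
  have h2 : monomial (N m) (1 : F) = monomial (base m) 1 * ((X 2 ^ 2) ^ kmin m) := by
    rw [← pow_mul, X_pow_eq_monomial, monomial_mul, one_mul]
    conv_lhs => rw [N_eq m]
  rw [h1, h2, ← mul_sub]
  exact Ideal.mul_mem_left _ _
    (Ideal.mem_span_singleton.mpr (sub_dvd_pow_sub_pow _ _ _))

def r (p : MvPolynomial (Fin 3) F) : MvPolynomial (Fin 3) F :=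
  ∑ m ∈ p.support, monomial (N m) (coeff m p)

lemma sub_r_mem (p : MvPolynomial (Fin 3) F) : p - r F p ∈ I F := by
  have hp : p - r F p
      = ∑ m ∈ p.support, (monomial m (coeff m p) - monomial (N m) (coeff m p)) := by
    rw [Finset.sum_sub_distrib]
    congr 1
    exact p.as_sum
  rw [hp]
  apply Ideal.sum_mem
  intro m _
  have : monomial m (coeff m p) - monomial (N m) (coeff m p)
      = C (coeff m p) * ((monomial m (1 : F)) - monomial (N m) 1) := by
    rw [mul_sub, C_mul_monomial, C_mul_monomial, mul_one]
  rw [this]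
  exact Ideal.mul_mem_left _ _ (monomial_sub_mem F m)

lemma aeval_r (p : MvPolynomial (Fin 3) F) :
    MvPolynomial.aeval (v F) (r F p) = MvPolynomial.aeval (v F) p := by
  conv_rhs => rw [p.as_sum]
  rw [r, map_sum, map_sum]

  refine Finset.sum_congr rfl fun m _ => ?_
  rw [aeval_monomial', aeval_monomial', T_N]

lemma eq_zero_of_normal (q : MvPolynomial (Fin 3) F)
    (hq : ∀ m ∈ q.support, min (m 0) (m 1) = 0)
    (h : MvPolynomial.aeval (v F) q = 0) : q = 0 := by
  by_contra hne
  obtain ⟨m₀, hm₀⟩ := (MvPolynomial.support_nonempty.mpr hne)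
  have hsum : (∑ m ∈ q.support, AddMonoidAlgebra.single (T m) (coeff m q)) = 0 := by
    rw [← h]
    conv_rhs => rw [q.as_sum]
    rw [map_sum]
    exact Finset.sum_congr rfl fun m _ => (aeval_monomial' F m (coeff m q)).symm
  have happ : (∑ m ∈ q.support,
      (AddMonoidAlgebra.single (T m) (coeff m q) : AddMonoidAlgebra F (ℤ × ℤ)).coeff (T m₀)) = 0 := by
    rw [← Finsupp.finset_sum_apply, ← AddMonoidAlgebra.coeff_sum, hsum]
    rfl
  simp only [AddMonoidAlgebra.coeff_single] at happ
  rw [Finset.sum_eq_single_of_mem m₀ hm₀ (fun m hm hne' =>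
    Finsupp.single_eq_of_ne' (fun hT => hne' (T_inj (hq m hm) (hq m₀ hm₀) hT)))] at happ
  rw [Finsupp.single_eq_same] at happ
  exact (MvPolynomial.mem_support_iff.mp hm₀) happ

lemma r_support_normal (p : MvPolynomial (Fin 3) F) :
    ∀ m ∈ (r F p).support, min (m 0) (m 1) = 0 := by
  intro m hm
  have := MvPolynomial.support_sum hm
  rw [Finset.mem_biUnion] at this
  obtain ⟨m', _, hmem⟩ := this
  have := MvPolynomial.support_monomial_subset hmem
  rw [Finset.mem_singleton] at this
  rw [this]
  exact N_normal m'

lemma ker_le (p : MvPolynomial (Fin 3) F)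
    (hp : MvPolynomial.aeval (v F) p = 0) : p ∈ I F := by
  have h0 : r F p = 0 :=
    eq_zero_of_normal F _ (r_support_normal F p) (by rw [aeval_r]; exact hp)
  have h := sub_r_mem F p
  rwa [h0, sub_zero] at h

end Stmt12Aux

/-- Let `F` be a field and `φ : F[y₁,y₂,y₃] → F[ℤ²]` the `F`-algebra homomorphism into the
group algebra of `ℤ²` (Laurent polynomials in `x₁,x₂`) with `φ(y₁) = x₂⁻¹`,
`φ(y₂) = x₁²x₂³`, `φ(y₃) = x₁x₂`. Then `ker φ = (y₁y₂ − y₃²)`. -/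
theorem stmt12 (F : Type) [Field F] :
    RingHom.ker (MvPolynomial.aeval
        (![AddMonoidAlgebra.of' F (ℤ × ℤ) (0, -1),
           AddMonoidAlgebra.of' F (ℤ × ℤ) (2, 3),
           AddMonoidAlgebra.of' F (ℤ × ℤ) (1, 1)] :
          Fin 3 → AddMonoidAlgebra F (ℤ × ℤ)) :
        MvPolynomial (Fin 3) F →ₐ[F] AddMonoidAlgebra F (ℤ × ℤ)).toRingHom =
      Ideal.span {MvPolynomial.X 0 * MvPolynomial.X 1 - MvPolynomial.X 2 ^ 2} := by
  apply le_antisymm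
  · intro p hp
    exact Stmt12Aux.ker_le F p hp
  · rw [Ideal.span_le]
    intro b hb
    rw [Set.mem_singleton_iff] at hb
    subst hb
    rw [SetLike.mem_coe, RingHom.mem_ker]
    simp only [AlgHom.toRingHom_eq_coe, RingHom.coe_coe, map_sub, map_mul, map_pow,
      MvPolynomial.aeval_X, Matrix.cons_val_zero, Matrix.cons_val_one, Matrix.head_cons,
      Matrix.cons_val_two, Matrix.tail_cons, AddMonoidAlgebra.of'_apply,
      AddMonoidAlgebra.single_mul_single, AddMonoidAlgebra.single_pow, one_mul, one_pow]
    have h22 : ((0 : ℤ), (-1 : ℤ)) + (2, 3) = (2 : ℕ) • ((1 : ℤ), (1 : ℤ)) := by decide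
    rw [h22, sub_self]
end
end

section
/- Let q be a prime power and a a positive integer with q > 2a + 1. Let P_L = {(i,j) ∈ ℤ² : 0 ≤ i ≤ a and i ≤ j ≤ 2a − i} (the lattice points of the triangle with vertices (0,0), (a,a), (0,2a)). Then the toric code C_{P_L} has dimension (a+1)² over 𝔽_q, and every nonzero codeword c ∈ C_{P_L} has Hamming weight at least (q−1)² − 2a(q−1). -/
open Polynomial Finset

namespace Stmt13Aux

/-- The exponent set: lattice points of the triangle, as natural number pairs. -/
def Pset (a : ℕ) : Finset (ℕ × ℕ) :=
  (Finset.range (a + 1)).biUnion fun i => (Finset.Icc i (2 * a - i)).image fun j => (i, j)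

lemma mem_Pset {a : ℕ} {p : ℕ × ℕ} :
    p ∈ Pset a ↔ p.1 ≤ a ∧ p.1 ≤ p.2 ∧ p.1 + p.2 ≤ 2 * a := by
  simp only [Pset, Finset.mem_biUnion, Finset.mem_image, Finset.mem_Icc, Finset.mem_range]
  constructor
  · rintro ⟨i, hi, j, ⟨h1, h2⟩, rfl⟩
    simp only
    omega
  · rintro ⟨h1, h2, h3⟩
    exact ⟨p.1, by omega, p.2, ⟨by omega, by omega⟩, rfl⟩

lemma sum_odd (n : ℕ) : ∑ i ∈ Finset.range n, (2 * i + 1) = n ^ 2 := by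
  induction n with
  | zero => simp
  | succ n ih => rw [Finset.sum_range_succ, ih]; ring

lemma card_Pset (a : ℕ) : (Pset a).card = (a + 1) ^ 2 := by
  rw [Pset, Finset.card_biUnion]
  · have hstep : ∀ i ∈ Finset.range (a + 1),
        ((Finset.Icc i (2 * a - i)).image fun j => (i, j)).card = 2 * a - i + 1 - i := by
      intro i hi
      have hinj : Function.Injective (fun j => ((i, j) : ℕ × ℕ)) := by
        intro x y h
        simpa using h
      rw [Finset.card_image_of_injective _ hinj, Nat.card_Icc]
    rw [Finset.sum_congr rfl hstep, ← Finset.sum_range_reflect, ← sum_odd (a + 1)]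
    apply Finset.sum_congr rfl
    intro i hi
    simp only [Finset.mem_range] at hi
    omega
  · intro i _ j _ hij
    simp only [Finset.disjoint_left, Finset.mem_image]
    rintro p ⟨x, _, rfl⟩ ⟨y, _, h⟩
    exact hij (congrArg Prod.fst h).symm

variable (F : Type) [Field F] [Fintype F]

/-- The monomial character as a monoid hom. -/
def chi (p : ℕ × ℕ) : (Fˣ × Fˣ) →* F where
  toFun := fun t => ((t.1 : F)) ^ p.1 * ((t.2 : F)) ^ p.2
  map_one' := by simp
  map_mul' := fun s t => by
    simp only [Prod.fst_mul, Prod.snd_mul, Units.val_mul, mul_pow]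
    ring

lemma chi_injOn {q a : ℕ} (ha : 0 < a) (hq : 2 * a + 1 < q) (hF : Fintype.card F = q) :
    Set.InjOn (chi F) (Pset a) := by
  classical
  obtain ⟨g, hg⟩ := IsCyclic.exists_generator (α := Fˣ)
  have horder : orderOf g = q - 1 := by
    rw [orderOf_eq_card_of_forall_mem_zpowers hg, Nat.card_eq_fintype_card,
      Fintype.card_units, hF]
  intro p hp p' hp' h
  replace hp : p ∈ Pset a := hp
  replace hp' : p' ∈ Pset a := hp'
  rw [mem_Pset] at hp hp'
  have key : ∀ n m : ℕ, n < q - 1 → m < q - 1 →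
      ((g : F)) ^ n = ((g : F)) ^ m → n = m := by
    intro n m hn hm hnm
    have hgnm : g ^ n = g ^ m := by
      ext; push_cast; exact hnm
    exact pow_injOn_Iio_orderOf (by rwa [Set.mem_Iio, horder]) (by rwa [Set.mem_Iio, horder]) hgnm
  have e1 := congrArg (fun f : (Fˣ × Fˣ) →* F => f (g, 1)) h
  have e2 := congrArg (fun f : (Fˣ × Fˣ) →* F => f (1, g)) h
  simp only [chi, MonoidHom.coe_mk, OneHom.coe_mk] at e1 e2
  push_cast at e1 e2
  simp only [one_pow, mul_one, one_mul] at e1 e2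
  have h1 : p.1 = p'.1 := key _ _ (by omega) (by omega) e1
  have h2 : p.2 = p'.2 := key _ _ (by omega) (by omega) e2
  exact Prod.ext h1 h2

/-- The monomial function. -/
def eFun (p : ℕ × ℕ) : (Fˣ × Fˣ) → F := fun t => ((t.1 : F)) ^ p.1 * ((t.2 : F)) ^ p.2

/-- The set in the statement equals the image of `Pset`. -/
lemma set_eq (a : ℕ) :
    ((fun ij : ℤ × ℤ => fun t : Fˣ × Fˣ => ((t.1 ^ ij.1 * t.2 ^ ij.2 : Fˣ) : F)) ''
      {ij : ℤ × ℤ | 0 ≤ ij.1 ∧ ij.1 ≤ (a : ℤ) ∧ ij.1 ≤ ij.2 ∧ ij.2 ≤ 2 * a - ij.1})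
    = eFun F '' ↑(Pset a) := by
  ext c
  simp only [Set.mem_image, Set.mem_setOf_eq, Finset.mem_coe, mem_Pset]
  constructor
  · rintro ⟨ij, ⟨h1, h2, h3, h4⟩, rfl⟩
    refine ⟨(ij.1.toNat, ij.2.toNat), ⟨by omega, by omega, by omega⟩, ?_⟩
    funext t
    have e1 : t.1 ^ ij.1 = t.1 ^ ij.1.toNat := by
      rw [← zpow_natCast]; congr 1; omega
    have e2 : t.2 ^ ij.2 = t.2 ^ ij.2.toNat := by
      rw [← zpow_natCast]; congr 1; omega
    rw [eFun]
    simp only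
    rw [e1, e2]
    simp only [Units.val_mul, Units.val_pow_eq_pow_val]
  · rintro ⟨p, ⟨h1, h2, h3⟩, rfl⟩
    refine ⟨((p.1 : ℤ), (p.2 : ℤ)), ⟨by omega, by omega, by omega, by omega⟩, ?_⟩
    funext t
    simp only [zpow_natCast, eFun]
    simp only [Units.val_mul, Units.val_pow_eq_pow_val]

set_option maxHeartbeats 1000000 in
lemma linIndep {q a : ℕ} (ha : 0 < a) (hq : 2 * a + 1 < q) (hF : Fintype.card F = q) :
    LinearIndependent F (fun p : {x // x ∈ Pset a} => eFun F p.1) := by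
  have hinj : Function.Injective (fun p : {x // x ∈ Pset a} => chi F p.1) := by
    intro p p' hpp'
    exact Subtype.ext (chi_injOn F ha hq hF (Finset.mem_coe.mpr p.2)
      (Finset.mem_coe.mpr p'.2) hpp')
  exact (linearIndependent_monoidHom (Fˣ × Fˣ) F).comp _ hinj

/-- counting roots of a polynomial among units -/
lemma card_units_roots_le [DecidableEq F] (g : Polynomial F) (hg : g ≠ 0) :
    (Finset.univ.filter fun x : Fˣ => g.eval (x : F) = 0).card ≤ g.natDegree := by
  calc (Finset.univ.filter fun x : Fˣ => g.eval (x : F) = 0).card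
      ≤ g.roots.toFinset.card := by
        refine Finset.card_le_card_of_injOn (fun x => (x : F)) ?_ ?_
        · intro x hx
          simp only [Finset.mem_coe, Finset.mem_filter] at hx
          simp only [Finset.mem_coe, Multiset.mem_toFinset, Polynomial.mem_roots hg, Polynomial.IsRoot]
          exact hx.2
        · intro x _ y _ hxy
          exact Units.ext hxy
    _ ≤ Multiset.card g.roots := Multiset.toFinset_card_le _
    _ ≤ g.natDegree := Polynomial.card_roots' g

end Stmt13Aux

open Stmt13Aux

/-- Hansen's theorem, case (a): for `q > 2a+1` and `P_L` the lattice points of the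
isoceles triangle with vertices `(0,0)`, `(a,a)`, `(0,2a)`, the toric code `C_{P_L}`
(the span of the monomial functions `t ↦ t₁^i t₂^j`, `(i,j) ∈ P_L`, on the torus
`T = 𝔽_qˣ × 𝔽_qˣ`) has dimension `(a+1)²` and minimum distance at least
`(q−1)² − 2a(q−1)`. -/
theorem stmt13 (q a : ℕ) (ha : 0 < a) (hq : 2 * a + 1 < q)
    (F : Type) [Field F] [Fintype F] (hF : Fintype.card F = q) :
    Module.finrank F (Submodule.span F
        ((fun ij : ℤ × ℤ => fun t : Fˣ × Fˣ => ((t.1 ^ ij.1 * t.2 ^ ij.2 : Fˣ) : F)) ''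
          {ij : ℤ × ℤ | 0 ≤ ij.1 ∧ ij.1 ≤ (a : ℤ) ∧ ij.1 ≤ ij.2 ∧ ij.2 ≤ 2 * a - ij.1}))
      = (a + 1) ^ 2 ∧
    ∀ c ∈ Submodule.span F
        ((fun ij : ℤ × ℤ => fun t : Fˣ × Fˣ => ((t.1 ^ ij.1 * t.2 ^ ij.2 : Fˣ) : F)) ''
          {ij : ℤ × ℤ | 0 ≤ ij.1 ∧ ij.1 ≤ (a : ℤ) ∧ ij.1 ≤ ij.2 ∧ ij.2 ≤ 2 * a - ij.1}),
      c ≠ 0 →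
        ((q : ℤ) - 1) ^ 2 - 2 * (a : ℤ) * ((q : ℤ) - 1) ≤
          (Set.ncard {t : Fˣ × Fˣ | c t ≠ 0} : ℤ) := by
  classical
  rw [set_eq F a]
  constructor
  · -- dimension
    have himg : eFun F '' ↑(Pset a)
        = Set.range (fun p : {x // x ∈ Pset a} => eFun F p.1) := by
      ext y
      simp only [Set.mem_image, Set.mem_range, Finset.mem_coe, Subtype.exists]
      constructor
      · rintro ⟨p, hp, rfl⟩; exact ⟨p, hp, rfl⟩
      · rintro ⟨p, hp, rfl⟩; exact ⟨p, hp, rfl⟩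
    rw [himg, finrank_span_eq_card (linIndep F ha hq hF), Fintype.card_coe, card_Pset]
  · -- minimum distance
    intro c hc hc0
    rw [Finsupp.mem_span_image_iff_linearCombination] at hc
    obtain ⟨l, hlsupp, hlc⟩ := hc
    rw [Finsupp.mem_supported] at hlsupp
    have hmem : ∀ p : ℕ × ℕ, l p ≠ 0 → p.1 ≤ a ∧ p.1 ≤ p.2 ∧ p.1 + p.2 ≤ 2 * a := by
      intro p hp
      have := hlsupp (Finsupp.mem_support_iff.mpr hp)
      rwa [Finset.mem_coe, mem_Pset] at this
    set f : Polynomial (Polynomial F) :=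
      ∑ p ∈ l.support, Polynomial.C (Polynomial.C (l p) * Polynomial.X ^ p.2)
        * Polynomial.X ^ p.1 with hf
    -- coefficient formula
    have hcoeff : ∀ i j : ℕ, (f.coeff i).coeff j = l (i, j) := by
      intro i j
      rw [hf, Polynomial.finset_sum_coeff]
      have hterm : ∀ p ∈ l.support,
          ((Polynomial.C (Polynomial.C (l p) * Polynomial.X ^ p.2)
            * Polynomial.X ^ p.1).coeff i).coeff j
          = if (i, j) = p then l p else 0 := by
        intro p _
        rw [Polynomial.coeff_C_mul, Polynomial.coeff_X_pow]
        by_cases h1 : i = p.1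
        · by_cases h2 : j = p.2
          · simp [h1, h2, Polynomial.coeff_C_mul, Polynomial.coeff_X_pow,
              Prod.ext_iff]
          · simp [h1, h2, Polynomial.coeff_C_mul, Polynomial.coeff_X_pow,
              Prod.ext_iff]
        · simp [h1, Prod.ext_iff]
      rw [Polynomial.finset_sum_coeff, Finset.sum_congr rfl hterm, Finset.sum_ite_eq]
      by_cases hmem2 : (i, j) ∈ l.support
      · simp [hmem2]
      · simp [hmem2, Finsupp.notMem_support_iff.mp hmem2]
    -- evaluation formula
    have heval : ∀ t : Fˣ × Fˣ,
        c t = Polynomial.eval ((t.1 : F)) (f.map (Polynomial.evalRingHom ((t.2 : F)))) := by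
      intro t
      rw [← hlc, Finsupp.linearCombination_apply, Finsupp.sum, hf,
        Polynomial.map_sum, Polynomial.eval_finset_sum, Finset.sum_apply]
      apply Finset.sum_congr rfl
      intro p _
      simp only [Pi.smul_apply, smul_eq_mul, eFun, Polynomial.map_mul, Polynomial.map_C,
        Polynomial.map_pow, Polynomial.map_X, Polynomial.eval_mul, Polynomial.eval_pow,
        Polynomial.eval_C, Polynomial.eval_X, Polynomial.coe_evalRingHom,
        Polynomial.eval_mul, Polynomial.eval_pow]
      ring
    have hf0 : f ≠ 0 := by
      intro h0
      apply hc0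
      rw [← hlc]
      have hl0 : l = 0 := by
        ext p
        have := hcoeff p.1 p.2
        rw [h0] at this
        simpa using this.symm
      simp [hl0]
    set d := f.natDegree with hd
    have hld : f.coeff d ≠ 0 := by
      rw [hd, Polynomial.coeff_natDegree]
      exact Polynomial.leadingCoeff_ne_zero.mpr hf0
    obtain ⟨j0, hj0⟩ : ∃ j, (f.coeff d).coeff j ≠ 0 := by
      by_contra hcon
      push_neg at hcon
      exact hld (Polynomial.ext hcon)
    have hda : d ≤ a := by
      have := hmem (d, j0) (by rw [← hcoeff]; exact hj0)
      exact this.1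
    have hfd_deg : (f.coeff d).natDegree ≤ 2 * a - d := by
      rw [Polynomial.natDegree_le_iff_coeff_eq_zero]
      intro N hN
      by_contra hne
      have := hmem (d, N) (by rw [← hcoeff]; exact hne)
      omega
    -- bad set of y values
    set B : Finset Fˣ := Finset.univ.filter fun y : Fˣ => (f.coeff d).eval ((y : F)) = 0
      with hB
    have hBcard : B.card ≤ 2 * a - d :=
      le_trans (card_units_roots_le F _ hld) hfd_deg
    -- zero set
    set Z : Finset (Fˣ × Fˣ) := Finset.univ.filter fun t : Fˣ × Fˣ => c t = 0 with hZdef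
    have hcardU : Fintype.card Fˣ = q - 1 := by rw [Fintype.card_units, hF]
    have hZ : Z.card = ∑ y ∈ Finset.univ, (Z.filter fun t => t.2 = y).card :=
      Finset.card_eq_sum_card_fiberwise (fun x _ => Finset.mem_univ x.2)
    have hfiber_inj : ∀ y : Fˣ,
        Set.InjOn Prod.fst ((Z.filter fun t => t.2 = y : Finset (Fˣ × Fˣ)) : Set (Fˣ × Fˣ)) := by
      intro y t ht t' ht' htt'
      simp only [Finset.coe_filter, Set.mem_setOf_eq] at ht ht'
      exact Prod.ext htt' (ht.2.trans ht'.2.symm)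
    have hfiber_bad : ∀ y : Fˣ, (Z.filter fun t => t.2 = y).card ≤ q - 1 := by
      intro y
      calc (Z.filter fun t => t.2 = y).card ≤ (Finset.univ : Finset Fˣ).card :=
            Finset.card_le_card_of_injOn Prod.fst (fun _ _ => Finset.mem_univ _)
              (hfiber_inj y)
        _ = q - 1 := by rw [Finset.card_univ, hcardU]
    have hfiber_good : ∀ y : Fˣ, (f.coeff d).eval ((y : F)) ≠ 0 →
        (Z.filter fun t => t.2 = y).card ≤ d := by
      intro y hy
      set g : Polynomial F := f.map (Polynomial.evalRingHom ((y : F))) with hg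
      have hg0 : g ≠ 0 := by
        intro hzero
        apply hy
        have : g.coeff d = 0 := by rw [hzero]; simp
        rwa [hg, Polynomial.coeff_map, Polynomial.coe_evalRingHom] at this
      have hgdeg : g.natDegree ≤ d := Polynomial.natDegree_map_le
      calc (Z.filter fun t => t.2 = y).card
          ≤ (Finset.univ.filter fun x : Fˣ => g.eval ((x : F)) = 0).card := by
            refine Finset.card_le_card_of_injOn Prod.fst ?_ (hfiber_inj y)
            intro t ht
            simp only [Finset.mem_coe, hZdef, Finset.mem_filter, Finset.mem_univ, true_and] at ht
            simp only [Finset.mem_coe, Finset.mem_filter, Finset.mem_univ, true_and]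
            have hh := heval t
            rw [ht.2] at hh
            rw [hg, ← hh]
            exact ht.1
        _ ≤ g.natDegree := card_units_roots_le F g hg0
        _ ≤ d := hgdeg
    have htotal : Z.card ≤ 2 * a * (q - 1) := by
      rw [hZ, ← Finset.sum_filter_add_sum_filter_not Finset.univ
        (fun y : Fˣ => (f.coeff d).eval ((y : F)) = 0)]
      have hs1 : ∑ y ∈ Finset.univ.filter (fun y : Fˣ => (f.coeff d).eval ((y : F)) = 0),
          (Z.filter fun t => t.2 = y).card ≤ (2 * a - d) * (q - 1) := by
        calc _ ≤ B.card • (q - 1) :=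
              Finset.sum_le_card_nsmul _ _ _ (fun y _ => hfiber_bad y)
          _ ≤ (2 * a - d) * (q - 1) := by
              rw [smul_eq_mul]
              exact Nat.mul_le_mul_right _ hBcard
      have hs2 : ∑ y ∈ Finset.univ.filter (fun y : Fˣ => ¬ (f.coeff d).eval ((y : F)) = 0),
          (Z.filter fun t => t.2 = y).card ≤ (q - 1) * d := by
        calc _ ≤ (Finset.univ.filter
              (fun y : Fˣ => ¬ (f.coeff d).eval ((y : F)) = 0)).card • d := by
              apply Finset.sum_le_card_nsmul
              intro y hy
              simp only [Finset.mem_filter] at hy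
              exact hfiber_good y hy.2
          _ ≤ (q - 1) * d := by
              rw [smul_eq_mul]
              apply Nat.mul_le_mul_right
              calc _ ≤ (Finset.univ : Finset Fˣ).card := Finset.card_filter_le _ _
                _ = q - 1 := by rw [Finset.card_univ, hcardU]
      have harith : (2 * a - d) * (q - 1) + (q - 1) * d = 2 * a * (q - 1) := by
        have hd2 : d ≤ 2 * a := by omega
        rw [mul_comm (q - 1) d, ← add_mul, Nat.sub_add_cancel hd2]
      omega
    -- final assembly
    have hcompl : {t : Fˣ × Fˣ | c t ≠ 0}
        = ↑(Finset.univ.filter fun t : Fˣ × Fˣ => c t ≠ 0) := by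
      ext t; simp
    rw [hcompl, Set.ncard_coe_finset]
    have hsum : Z.card + (Finset.univ.filter fun t : Fˣ × Fˣ => c t ≠ 0).card
        = Fintype.card (Fˣ × Fˣ) := by
      rw [hZdef]
      rw [Finset.card_filter_add_card_filter_not (fun t : Fˣ × Fˣ => c t = 0),
        Finset.card_univ]
    have hcardT : Fintype.card (Fˣ × Fˣ) = (q - 1) * (q - 1) := by
      rw [Fintype.card_prod, hcardU]
    have hq1 : 1 ≤ q := by omega
    have e1 : ((q - 1 : ℕ) : ℤ) = (q : ℤ) - 1 := by
      push_cast [Nat.cast_sub hq1]; ring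
    have h1 : (Z.card : ℤ) + ((Finset.univ.filter fun t : Fˣ × Fˣ => c t ≠ 0).card : ℤ)
        = ((q : ℤ) - 1) * ((q : ℤ) - 1) := by
      rw [← e1]
      exact_mod_cast congrArg (Nat.cast : ℕ → ℤ) (hsum.trans hcardT)
    have h2 : (Z.card : ℤ) ≤ 2 * (a : ℤ) * ((q : ℤ) - 1) := by
      rw [← e1]
      exact_mod_cast Nat.cast_le.mpr htotal
    have hsq : ((q : ℤ) - 1) ^ 2 = ((q : ℤ) - 1) * ((q : ℤ) - 1) := by ring
    linarith
end

section
/- Let q be a prime power and a a positive integer with q > a + 1. Let P_L = {(i,j) ∈ ℤ² : i ≥ 0, j ≥ 0, i + j ≤ a} (the lattice points of the triangle with vertices (0,0), (a,0), (0,a)). Then the toric code C_{P_L} has dimension (a+1)(a+2)/2 over 𝔽_q, and every nonzero codeword c ∈ C_{P_L} has Hamming weight at least (q−1)² − a(q−1). -/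
open Polynomial Finset

noncomputable def evalLin (F : Type) [Field F] : Polynomial (Polynomial F) →ₗ[F] (Fˣ × Fˣ → F) where
  toFun f := fun t => Polynomial.eval₂ (Polynomial.evalRingHom (t.1 : F)) (t.2 : F) f
  map_add' f g := by funext t; simp [Polynomial.eval₂_add]
  map_smul' c f := by
    funext t
    have h1 : c • f = Polynomial.C (Polynomial.C c) * f := by
      rw [← Polynomial.smul_eq_C_mul]
      rw [← Polynomial.algebraMap_eq]
      rw [algebraMap_smul]
    simp [h1]

lemma roots_card_bound {F : Type} [Field F] [Fintype F] [DecidableEq F] {g : Polynomial F} (hg : g ≠ 0) :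
    (Finset.univ.filter (fun y : Fˣ => Polynomial.eval (y : F) g = 0)).card ≤ g.natDegree := by
  have h1 : (Finset.univ.filter (fun y : Fˣ => Polynomial.eval (y : F) g = 0)).card
      ≤ g.roots.toFinset.card := by
    refine Finset.card_le_card_of_injOn (fun y => (y : F)) ?_ ?_
    · intro y hy
      simp only [Finset.mem_coe, Finset.mem_filter] at hy
      simp [Multiset.mem_toFinset, Polynomial.mem_roots, hg, hy.2, IsRoot]
    · intro y _ z _ h
      exact Units.ext h
  exact h1.trans ((Multiset.toFinset_card_le _).trans (Polynomial.card_roots' g))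

lemma key_count {F : Type} [Field F] [Fintype F] [DecidableEq F] (a : ℕ)
    (f : Polynomial (Polynomial F))
    (hdeg : ∀ j, f.coeff j ≠ 0 → (f.coeff j).natDegree + j ≤ a) (hf : f ≠ 0) :
    (Finset.univ.filter (fun t : Fˣ × Fˣ => evalLin F f t = 0)).card
      ≤ a * Fintype.card Fˣ := by
  classical
  set J := f.natDegree with hJdef
  set p := f.coeff J with hpdef
  have hp : p ≠ 0 := by
    rw [hpdef, hJdef, ← Polynomial.leadingCoeff]
    exact Polynomial.leadingCoeff_ne_zero.mpr hf
  have hJa : p.natDegree + J ≤ a := hdeg J hp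
  have hJle : J ≤ a := le_trans (Nat.le_add_left _ _) hJa
  have hev : ∀ x y : Fˣ, evalLin F f (x, y)
      = (f.map (Polynomial.evalRingHom (x : F))).eval (y : F) := by
    intro x y
    simp [evalLin, Polynomial.eval_map]
  have fiber : (Finset.univ.filter (fun t : Fˣ × Fˣ => evalLin F f t = 0)).card
      = ∑ x : Fˣ, (Finset.univ.filter
          (fun y : Fˣ => (f.map (Polynomial.evalRingHom (x : F))).eval (y : F) = 0)).card := by
    rw [Finset.card_filter, Fintype.sum_prod_type]
    refine Finset.sum_congr rfl (fun x _ => ?_)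
    rw [Finset.card_filter]
    exact Finset.sum_congr rfl (fun y _ => by rw [hev])
  rw [fiber]
  have hxbound : ∀ x : Fˣ, (Finset.univ.filter
      (fun y : Fˣ => (f.map (Polynomial.evalRingHom (x : F))).eval (y : F) = 0)).card
        ≤ if p.eval (x : F) = 0 then Fintype.card Fˣ else J := by
    intro x
    split_ifs with h
    · exact le_trans (Finset.card_filter_le _ _) (by simp)
    · have hg : (f.map (Polynomial.evalRingHom (x : F))).coeff J ≠ 0 := by
        rwa [Polynomial.coeff_map]
      have hg0 : f.map (Polynomial.evalRingHom (x : F)) ≠ 0 := fun hz => hg (by simp [hz])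
      refine (roots_card_bound hg0).trans ?_
      exact Polynomial.natDegree_map_le
  calc (∑ x : Fˣ, (Finset.univ.filter
          (fun y : Fˣ => (f.map (Polynomial.evalRingHom (x : F))).eval (y : F) = 0)).card)
      ≤ ∑ x : Fˣ, (if p.eval (x : F) = 0 then Fintype.card Fˣ else J) :=
        Finset.sum_le_sum (fun x _ => hxbound x)
    _ = (Finset.univ.filter (fun x : Fˣ => p.eval (x : F) = 0)).card * Fintype.card Fˣ
        + (Finset.univ.filter (fun x : Fˣ => ¬ p.eval (x : F) = 0)).card * J := by
        rw [Finset.sum_ite, Finset.sum_const, Finset.sum_const]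
        simp [mul_comm, Nat.smul_one_eq_cast]
    _ ≤ (a - J) * Fintype.card Fˣ + Fintype.card Fˣ * J := by
        gcongr
        · exact (roots_card_bound hp).trans (by omega)
        · exact le_trans (Finset.card_filter_le _ _) (by simp)
    _ ≤ a * Fintype.card Fˣ := by
        have : (a - J) * Fintype.card Fˣ + Fintype.card Fˣ * J
            = ((a - J) + J) * Fintype.card Fˣ := by ring
        rw [this, Nat.sub_add_cancel hJle]

def degSub (F : Type) [Field F] (a : ℕ) : Submodule F (Polynomial (Polynomial F)) where
  carrier := {f | ∀ j, f.coeff j ≠ 0 → (f.coeff j).natDegree + j ≤ a}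
  zero_mem' := by intro j hj; simp at hj
  add_mem' := by
    intro f g hf hg j hj
    rw [Polynomial.coeff_add] at hj ⊢
    by_cases h1 : f.coeff j = 0
    · rw [h1, zero_add] at hj ⊢
      exact hg j hj
    by_cases h2 : g.coeff j = 0
    · rw [h2, add_zero] at hj ⊢
      exact hf j hj
    have := Polynomial.natDegree_add_le (f.coeff j) (g.coeff j)
    have b1 := hf j h1
    have b2 := hg j h2
    omega
  smul_mem' := by
    intro c f hf j hj
    rw [Polynomial.coeff_smul] at hj ⊢
    have h1 : f.coeff j ≠ 0 := fun h => hj (by simp [h])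
    have := Polynomial.natDegree_smul_le c (f.coeff j)
    have := hf j h1
    omega

lemma two_mul_sum (n : ℕ) : 2 * ∑ i ∈ Finset.range n, (n - i) = n * (n + 1) := by
  induction n with
  | zero => simp
  | succ k ih =>
    have h1 : ∑ i ∈ Finset.range (k+1), (k+1-i)
        = (∑ i ∈ Finset.range (k+1), (k-i)) + (k+1) := by
      calc ∑ i ∈ Finset.range (k+1), (k+1-i)
          = ∑ i ∈ Finset.range (k+1), ((k-i) + 1) := by
            refine Finset.sum_congr rfl (fun i hi => ?_)
            simp only [Finset.mem_range] at hi
            omega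
        _ = (∑ i ∈ Finset.range (k+1), (k-i)) + ∑ _i ∈ Finset.range (k+1), 1 :=
            Finset.sum_add_distrib
        _ = (∑ i ∈ Finset.range (k+1), (k-i)) + (k+1) := by simp
    have h2 : ∑ i ∈ Finset.range (k+1), (k-i) = ∑ i ∈ Finset.range k, (k-i) := by
      rw [Finset.sum_range_succ]; simp
    rw [h1, h2, Nat.mul_add, ih]; ring

lemma triangle_card (a : ℕ) :
    (((Finset.range (a+1)) ×ˢ (Finset.range (a+1))).filter
        (fun p : ℕ × ℕ => p.1 + p.2 ≤ a)).card = (a+1) * (a+2) / 2 := by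
  classical
  have hS : ((Finset.range (a+1)) ×ˢ (Finset.range (a+1))).filter
        (fun p : ℕ × ℕ => p.1 + p.2 ≤ a)
      = (Finset.range (a+1)).biUnion
          (fun i => (Finset.range (a+1-i)).image (fun j => (i, j))) := by
    ext ⟨i, j⟩
    simp only [Finset.mem_filter, Finset.mem_product, Finset.mem_range, Finset.mem_biUnion,
      Finset.mem_image, Prod.mk.injEq]
    constructor
    · rintro ⟨⟨h1, h2⟩, h3⟩
      exact ⟨i, by omega, j, by omega, rfl, rfl⟩
    · rintro ⟨i', hi', j', hj', rfl, rfl⟩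
      omega
  have hcard : (((Finset.range (a+1)) ×ˢ (Finset.range (a+1))).filter
        (fun p : ℕ × ℕ => p.1 + p.2 ≤ a)).card = ∑ i ∈ Finset.range (a+1), (a+1-i) := by
    rw [hS, Finset.card_biUnion]
    · refine Finset.sum_congr rfl (fun i _ => ?_)
      rw [Finset.card_image_of_injective, Finset.card_range]
      intro x y h
      simpa using h
    · intro i _ i' _ hne
      simp only [Finset.disjoint_left, Finset.mem_image]
      rintro ⟨u, v⟩ ⟨w, hw, heq⟩ ⟨w', hw', heq'⟩
      exact hne (congrArg Prod.fst (heq.trans heq'.symm))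
  have hsum : 2 * ∑ i ∈ Finset.range (a+1), (a+1-i) = (a+1) * (a+2) := by
    rw [two_mul_sum]
  omega


/-- Hansen's theorem, case (b): for `q > a+1` and `P_L` the lattice points of the triangle
with vertices `(0,0)`, `(a,0)`, `(0,a)`, the toric code `C_{P_L}` (the span of the
monomial functions `t ↦ t₁^i t₂^j`, `(i,j) ∈ P_L`, on `T = 𝔽_qˣ × 𝔽_qˣ`) has dimension
`(a+1)(a+2)/2` and minimum distance at least `(q−1)² − a(q−1)`. -/
theorem stmt14 (q a : ℕ) (ha : 0 < a) (hq : a + 1 < q)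
    (F : Type) [Field F] [Fintype F] (hF : Fintype.card F = q) :
    Module.finrank F (Submodule.span F
        ((fun ij : ℤ × ℤ => fun t : Fˣ × Fˣ => ((t.1 ^ ij.1 * t.2 ^ ij.2 : Fˣ) : F)) ''
          {ij : ℤ × ℤ | 0 ≤ ij.1 ∧ 0 ≤ ij.2 ∧ ij.1 + ij.2 ≤ (a : ℤ)}))
      = (a + 1) * (a + 2) / 2 ∧
    ∀ c ∈ Submodule.span F
        ((fun ij : ℤ × ℤ => fun t : Fˣ × Fˣ => ((t.1 ^ ij.1 * t.2 ^ ij.2 : Fˣ) : F)) ''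
          {ij : ℤ × ℤ | 0 ≤ ij.1 ∧ 0 ≤ ij.2 ∧ ij.1 + ij.2 ≤ (a : ℤ)}),
      c ≠ 0 →
        ((q : ℤ) - 1) ^ 2 - (a : ℤ) * ((q : ℤ) - 1) ≤
          (Set.ncard {t : Fˣ × Fˣ | c t ≠ 0} : ℤ) := by
  classical
  have hq1 : 1 ≤ q := by omega
  have hcardU : Fintype.card Fˣ = q - 1 := by rw [Fintype.card_units, hF]
  set S : Finset (ℕ × ℕ) := ((Finset.range (a+1)) ×ˢ (Finset.range (a+1))).filter
      (fun p : ℕ × ℕ => p.1 + p.2 ≤ a) with hSdef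
  have hmemS : ∀ p : ℕ × ℕ, p ∈ S ↔ p.1 + p.2 ≤ a := by
    intro p
    simp only [hSdef, Finset.mem_filter, Finset.mem_product, Finset.mem_range]
    omega
  set v : ℕ × ℕ → (Fˣ × Fˣ → F) := fun p t => ((t.1 ^ p.1 * t.2 ^ p.2 : Fˣ) : F) with hvdef
  have hGeq : ((fun ij : ℤ × ℤ => fun t : Fˣ × Fˣ => ((t.1 ^ ij.1 * t.2 ^ ij.2 : Fˣ) : F)) ''
          {ij : ℤ × ℤ | 0 ≤ ij.1 ∧ 0 ≤ ij.2 ∧ ij.1 + ij.2 ≤ (a : ℤ)}) = v '' ↑S := by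
    ext c
    simp only [Set.mem_image, Set.mem_setOf_eq]
    constructor
    · rintro ⟨⟨i, j⟩, ⟨hi, hj, hij⟩, rfl⟩
      refine ⟨(i.toNat, j.toNat), ?_, ?_⟩
      · rw [Finset.mem_coe, hmemS]; omega
      · funext t
        have hi' : (0:ℤ) ≤ i := hi
        have hj' : (0:ℤ) ≤ j := hj
        simp only [hvdef]
        have e1 : t.1 ^ i = t.1 ^ i.toNat := by
          rw [← zpow_natCast, Int.toNat_of_nonneg hi']
        have e2 : t.2 ^ j = t.2 ^ j.toNat := by
          rw [← zpow_natCast, Int.toNat_of_nonneg hj']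
        rw [e1, e2]
    · rintro ⟨p, hp, rfl⟩
      rw [Finset.mem_coe, hmemS] at hp
      refine ⟨((p.1 : ℤ), (p.2 : ℤ)),
        ⟨Int.natCast_nonneg _, Int.natCast_nonneg _,
          show ((p.1 : ℤ)) + ((p.2 : ℤ)) ≤ (a : ℤ) by exact_mod_cast hp⟩, ?_⟩
      funext t
      simp [hvdef, zpow_natCast]
  set mono : ℕ × ℕ → Polynomial (Polynomial F) :=
    fun p => Polynomial.C (Polynomial.X ^ p.1) * Polynomial.X ^ p.2 with hmono
  have hEv : ∀ p : ℕ × ℕ, evalLin F (mono p) = v p := by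
    intro p
    funext t
    show Polynomial.eval₂ (Polynomial.evalRingHom (t.1 : F)) (t.2 : F) (mono p) = v p t
    rw [← Polynomial.eval_map]
    simp [hmono, hvdef]
  have hspan : Submodule.span F (v '' ↑S)
      = Submodule.map (evalLin F) (Submodule.span F (mono '' ↑S)) := by
    rw [Submodule.map_span, ← Set.image_comp]
    congr 1
    exact (Set.image_congr (fun p _ => hEv p)).symm
  constructor
  · rw [hGeq]
    have himg : v '' ↑S = Set.range (fun p : ↥S => v ↑p) := Set.image_eq_range v ↑S
    rw [himg]
    set χ : ↥S → ((Fˣ × Fˣ) →* F) := fun p =>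
      { toFun := v ↑p
        map_one' := by simp [hvdef]
        map_mul' := by
          intro x y
          simp only [hvdef, Prod.fst_mul, Prod.snd_mul, mul_pow]
          push_cast
          ring } with hχ
    have hinj : Function.Injective χ := by
      intro p p' h
      obtain ⟨g, hg⟩ := IsCyclic.exists_generator (α := Fˣ)
      have horder : orderOf g = q - 1 := by
        rw [orderOf_eq_card_of_forall_mem_zpowers hg, Nat.card_eq_fintype_card, hcardU]
      have key : ∀ i i' : ℕ, i ≤ a → i' ≤ a → g ^ i = g ^ i' → i = i' := by
        intro i i' hi hi' hgi
        refine pow_injOn_Iio_orderOf ?_ ?_ hgi <;>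
          · simp only [Set.mem_Iio, horder]; omega
      have hp := (hmemS _).mp p.2
      have hp' := (hmemS _).mp p'.2
      have h1 := DFunLike.congr_fun h (g, 1)
      have h2 := DFunLike.congr_fun h ((1 : Fˣ), g)
      simp only [hχ, MonoidHom.coe_mk, OneHom.coe_mk, hvdef, one_pow, mul_one, one_mul] at h1 h2
      have e1 : (p : ℕ × ℕ).1 = (p' : ℕ × ℕ).1 :=
        key _ _ (by omega) (by omega) (Units.ext h1)
      have e2 : (p : ℕ × ℕ).2 = (p' : ℕ × ℕ).2 :=
        key _ _ (by omega) (by omega) (Units.ext h2)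
      exact Subtype.ext (Prod.ext e1 e2)
    have hli : LinearIndependent F (fun p : ↥S => v ↑p) :=
      (linearIndependent_monoidHom (Fˣ × Fˣ) F).comp χ hinj
    rw [finrank_span_eq_card hli, Fintype.card_coe]
    exact triangle_card a
  · intro c hc hc0
    rw [hGeq, hspan] at hc
    obtain ⟨f, hfM, hfc⟩ := hc
    have hle : Submodule.span F (mono '' ↑S) ≤ degSub F a := by
      rw [Submodule.span_le]
      rintro _ ⟨p, hp, rfl⟩
      rw [Finset.mem_coe, hmemS] at hp
      intro j hj
      simp only [hmono, Polynomial.coeff_C_mul, Polynomial.coeff_X_pow] at hj ⊢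
      by_cases hjp : j = p.2
      · subst hjp
        simp only [if_pos rfl, mul_one, Polynomial.natDegree_X_pow]
        simp [Polynomial.natDegree_X_pow]
        omega
      · simp [hjp] at hj
    have hfD : ∀ j, f.coeff j ≠ 0 → (f.coeff j).natDegree + j ≤ a := hle hfM
    have hf0 : f ≠ 0 := by
      rintro rfl
      rw [map_zero] at hfc
      exact hc0 hfc.symm
    have hcount := key_count a f hfD hf0
    rw [hfc, hcardU] at hcount
    have hsplit : (Finset.univ.filter (fun t : Fˣ × Fˣ => c t = 0)).card
        + (Finset.univ.filter (fun t : Fˣ × Fˣ => ¬ c t = 0)).card = (q-1) * (q-1) := by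
      rw [Finset.card_filter_add_card_filter_not]
      simp [Fintype.card_prod, hcardU]
    have hncard : {t : Fˣ × Fˣ | c t ≠ 0}.ncard
        = (Finset.univ.filter (fun t : Fˣ × Fˣ => ¬ c t = 0)).card := by
      rw [Set.ncard_eq_toFinset_card']
      simp [Set.toFinset_setOf]
    rw [hncard]
    have hq2 : ((q - 1 : ℕ) : ℤ) = (q : ℤ) - 1 := by omega
    have hZ' : ((Finset.univ.filter (fun t : Fˣ × Fˣ => c t = 0)).card : ℤ)
        ≤ (a : ℤ) * ((q : ℤ) - 1) := by
      calc ((Finset.univ.filter (fun t : Fˣ × Fˣ => c t = 0)).card : ℤ)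
          ≤ ((a * (q - 1) : ℕ) : ℤ) := by exact_mod_cast hcount
        _ = (a : ℤ) * ((q : ℤ) - 1) := by push_cast [hq1]; ring
    have hsplit' : ((Finset.univ.filter (fun t : Fˣ × Fˣ => c t = 0)).card : ℤ)
        + ((Finset.univ.filter (fun t : Fˣ × Fˣ => ¬ c t = 0)).card : ℤ)
        = ((q : ℤ) - 1) * ((q : ℤ) - 1) := by
      rw [← hq2]
      exact_mod_cast hsplit
    nlinarith [hZ', hsplit']
end

section
/- Let q be a prime power and a, b positive integers with q > max(a,b) + 1. Let P_L = {(i,j) ∈ ℤ² : 0 ≤ i ≤ a, 0 ≤ j ≤ b} (the lattice points of the rectangle with vertices (0,0), (a,0), (0,b), (a,b)). Then the toric code C_{P_L} has dimension (a+1)(b+1) over 𝔽_q, and every nonzero codeword c ∈ C_{P_L} has Hamming weight at least (q−1)² − a(q−1) − b(q−1) + ab. -/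
open Polynomial Finset

section Aux

set_option linter.unusedSectionVars false

variable {F : Type} [Field F] [Fintype F] {a b : ℕ}

private def dd (g : Fin (a+1) × Fin (b+1) → F) (i : Fin (a+1)) (y : Fˣ) : F :=
  ∑ j : Fin (b+1), g (i, j) * (y : F) ^ (j : ℕ)

private noncomputable def PP (g : Fin (a+1) × Fin (b+1) → F) (y : Fˣ) : Polynomial F :=
  ∑ i : Fin (a+1), Polynomial.C (dd g i y) * Polynomial.X ^ (i : ℕ)

private noncomputable def QQ (g : Fin (a+1) × Fin (b+1) → F) (i : Fin (a+1)) : Polynomial F :=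
  ∑ j : Fin (b+1), Polynomial.C (g (i, j)) * Polynomial.X ^ (j : ℕ)

private lemma unit_zpow_toNat (u : Fˣ) (n : ℤ) (h : 0 ≤ n) :
    ((u ^ n : Fˣ) : F) = (u : F) ^ n.toNat := by
  lift n to ℕ using h
  simp

private lemma coeff_PP (g : Fin (a+1) × Fin (b+1) → F) (y : Fˣ) (i : Fin (a+1)) :
    (PP g y).coeff i = dd g i y := by
  simp only [PP, finset_sum_coeff, coeff_C_mul, coeff_X_pow]
  rw [Finset.sum_eq_single i]
  · simp
  · intro j _ hj
    simp only [mul_ite, mul_one, mul_zero, ite_eq_right_iff]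
    exact fun h => absurd (Fin.val_inj.mp h).symm hj
  · simp

private lemma coeff_QQ (g : Fin (a+1) × Fin (b+1) → F) (i : Fin (a+1)) (j : Fin (b+1)) :
    (QQ g i).coeff j = g (i, j) := by
  simp only [QQ, finset_sum_coeff, coeff_C_mul, coeff_X_pow]
  rw [Finset.sum_eq_single j]
  · simp
  · intro j' _ hj
    simp only [mul_ite, mul_one, mul_zero, ite_eq_right_iff]
    exact fun h => absurd (Fin.val_inj.mp h).symm hj
  · simp

private lemma natDegree_PP (g : Fin (a+1) × Fin (b+1) → F) (y : Fˣ) :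
    (PP g y).natDegree ≤ a := by
  apply Polynomial.natDegree_sum_le_of_forall_le
  intro i _
  exact (natDegree_C_mul_X_pow_le _ _).trans (Nat.lt_succ_iff.mp i.2)

private lemma natDegree_QQ (g : Fin (a+1) × Fin (b+1) → F) (i : Fin (a+1)) :
    (QQ g i).natDegree ≤ b := by
  apply Polynomial.natDegree_sum_le_of_forall_le
  intro j _
  exact (natDegree_C_mul_X_pow_le _ _).trans (Nat.lt_succ_iff.mp j.2)

private lemma eval_QQ (g : Fin (a+1) × Fin (b+1) → F) (i : Fin (a+1)) (y : Fˣ) :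
    (QQ g i).eval (y : F) = dd g i y := by
  simp [QQ, dd, eval_finset_sum]

private lemma eval_PP (g : Fin (a+1) × Fin (b+1) → F) (y : Fˣ) (x : Fˣ) :
    (PP g y).eval (x : F)
      = ∑ p : Fin (a+1) × Fin (b+1), g p * (x : F) ^ (p.1 : ℕ) * (y : F) ^ (p.2 : ℕ) := by
  simp only [PP, dd, eval_finset_sum, eval_mul, eval_C, eval_pow, eval_X,
    Fintype.sum_prod_type, Finset.sum_mul]
  exact Finset.sum_congr rfl fun i _ => Finset.sum_congr rfl fun j _ => by ring

/-- Key counting lemma -/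
private lemma key (q : ℕ) (hF : Fintype.card F = q)
    (g : Fin (a+1) × Fin (b+1) → F) (hg : g ≠ 0)
    (f : Fˣ × Fˣ → F)
    (hf : ∀ t : Fˣ × Fˣ,
      f t = ∑ p : Fin (a+1) × Fin (b+1), g p * (t.1 : F) ^ (p.1 : ℕ) * (t.2 : F) ^ (p.2 : ℕ)) :
    (q - 1 - b) * (q - 1 - a) ≤ {t : Fˣ × Fˣ | f t ≠ 0}.ncard := by
  classical
  have hcardU : Fintype.card Fˣ = q - 1 := by rw [Fintype.card_units, hF]
  have hncard : {t : Fˣ × Fˣ | f t ≠ 0}.ncard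
      = (Finset.univ.filter fun t : Fˣ × Fˣ => f t ≠ 0).card := by
    rw [← Set.ncard_coe_finset]
    congr 1
    ext t
    simp
  rw [hncard]
  set Bfin : Finset Fˣ := Finset.univ.filter (fun y => ∀ i, dd g i y = 0) with hBfin
  have hB : Bfin.card ≤ b := by
    obtain ⟨p₀, hp₀⟩ : ∃ p, g p ≠ 0 := by
      by_contra h
      push_neg at h
      exact hg (funext h)
    have hQne : QQ g p₀.1 ≠ 0 := by
      intro h0
      apply hp₀
      have := coeff_QQ g p₀.1 p₀.2
      rw [h0] at this
      simpa using this.symm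
    calc Bfin.card ≤ (QQ g p₀.1).roots.toFinset.card := by
          refine Finset.card_le_card_of_injOn (fun y => (y : F)) ?_ ?_
          · intro y hy
            simp only [Finset.mem_coe] at hy ⊢
            rw [hBfin, Finset.mem_filter] at hy
            rw [Multiset.mem_toFinset, Polynomial.mem_roots hQne]
            exact (by rw [IsRoot, eval_QQ]; exact hy.2 p₀.1)
          · intro y _ z _ h
            exact Units.ext h
      _ ≤ Multiset.card (QQ g p₀.1).roots := Multiset.toFinset_card_le _
      _ ≤ (QQ g p₀.1).natDegree := card_roots' _
      _ ≤ b := natDegree_QQ g p₀.1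
  have hrow : ∀ y : Fˣ, y ∉ Bfin →
      q - 1 - a ≤ (Finset.univ.filter fun x : Fˣ => f (x, y) ≠ 0).card := by
    intro y hy
    rw [hBfin, Finset.mem_filter] at hy
    push_neg at hy
    obtain ⟨i, hi⟩ := hy (Finset.mem_univ y)
    have hPne : PP g y ≠ 0 := by
      intro h0
      apply hi
      have := coeff_PP g y i
      rw [h0] at this
      simpa using this.symm
    have hZ : (Finset.univ.filter fun x : Fˣ => f (x, y) = 0).card ≤ a := by
      calc (Finset.univ.filter fun x : Fˣ => f (x, y) = 0).card
          ≤ (PP g y).roots.toFinset.card := by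
            refine Finset.card_le_card_of_injOn (fun x => (x : F)) ?_ ?_
            · intro x hx
              simp only [Finset.mem_coe] at hx ⊢
              rw [Finset.mem_filter] at hx
              rw [Multiset.mem_toFinset, Polynomial.mem_roots hPne]
              refine (by rw [IsRoot, eval_PP, ← hf (x, y)]; exact hx.2)
            · intro x _ z _ h
              exact Units.ext h
        _ ≤ Multiset.card (PP g y).roots := Multiset.toFinset_card_le _
        _ ≤ (PP g y).natDegree := card_roots' _
        _ ≤ a := natDegree_PP g y
    have hcompl : (Finset.univ.filter fun x : Fˣ => f (x, y) ≠ 0)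
        = Finset.univ \ (Finset.univ.filter fun x : Fˣ => f (x, y) = 0) := by
      ext x
      simp
    rw [hcompl, Finset.card_sdiff_of_subset (Finset.filter_subset _ _), Finset.card_univ, hcardU]
    omega
  set S : Finset (Fˣ × Fˣ) := Finset.univ.filter (fun t => f t ≠ 0) with hS
  have hfib : S.card = ∑ y : Fˣ, (S.filter fun t => t.2 = y).card :=
    Finset.card_eq_sum_card_fiberwise (fun t _ => Finset.mem_univ t.2)
  have hfibeq : ∀ y : Fˣ,
      (S.filter fun t => t.2 = y).card = (Finset.univ.filter fun x : Fˣ => f (x, y) ≠ 0).card := by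
    intro y
    refine Finset.card_bij' (fun t _ => t.1) (fun x _ => (x, y)) ?_ ?_ ?_ ?_
    · intro t ht
      simp only [hS, Finset.mem_filter, Finset.mem_univ, true_and] at ht ⊢
      have := ht.1
      rw [← ht.2]
      simpa using this
    · intro x hx
      simp only [hS, Finset.mem_filter, Finset.mem_univ, true_and] at hx ⊢
      exact ⟨hx, trivial⟩
    · intro t ht
      simp only [hS, Finset.mem_filter, Finset.mem_univ, true_and] at ht
      exact Prod.ext rfl ht.2.symm
    · intro x _
      rfl
  have hsum : (Finset.univ \ Bfin).card * (q - 1 - a) ≤ S.card := by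
    rw [hfib]
    calc (Finset.univ \ Bfin).card * (q - 1 - a)
        = ∑ _y ∈ Finset.univ \ Bfin, (q - 1 - a) := by
          rw [Finset.sum_const, smul_eq_mul]
      _ ≤ ∑ y ∈ Finset.univ \ Bfin, (S.filter fun t => t.2 = y).card := by
          apply Finset.sum_le_sum
          intro y hy
          rw [hfibeq y]
          exact hrow y (Finset.mem_sdiff.mp hy).2
      _ ≤ ∑ y : Fˣ, (S.filter fun t => t.2 = y).card :=
          Finset.sum_le_sum_of_subset Finset.sdiff_subset
  have hBc : q - 1 - b ≤ (Finset.univ \ Bfin).card := by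
    rw [Finset.card_sdiff_of_subset (Finset.subset_univ _), Finset.card_univ, hcardU]
    omega
  calc (q - 1 - b) * (q - 1 - a) ≤ (Finset.univ \ Bfin).card * (q - 1 - a) :=
        Nat.mul_le_mul_right _ hBc
    _ ≤ S.card := hsum

end Aux

/-- Hansen's theorem, case (c): for `q > max(a,b)+1` and `P_L` the lattice points of the
rectangle with vertices `(0,0)`, `(a,0)`, `(0,b)`, `(a,b)`, the toric code `C_{P_L}`
(the span of the monomial functions `t ↦ t₁^i t₂^j`, `(i,j) ∈ P_L`, on
`T = 𝔽_qˣ × 𝔽_qˣ`) has dimension `(a+1)(b+1)` and minimum distance at least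
`(q−1)² − a(q−1) − b(q−1) + ab`. -/
theorem stmt15 (q a b : ℕ) (ha : 0 < a) (hb : 0 < b) (hq : max a b + 1 < q)
    (F : Type) [Field F] [Fintype F] (hF : Fintype.card F = q) :
    Module.finrank F (Submodule.span F
        ((fun ij : ℤ × ℤ => fun t : Fˣ × Fˣ => ((t.1 ^ ij.1 * t.2 ^ ij.2 : Fˣ) : F)) ''
          {ij : ℤ × ℤ | 0 ≤ ij.1 ∧ ij.1 ≤ (a : ℤ) ∧ 0 ≤ ij.2 ∧ ij.2 ≤ (b : ℤ)}))
      = (a + 1) * (b + 1) ∧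
    ∀ c ∈ Submodule.span F
        ((fun ij : ℤ × ℤ => fun t : Fˣ × Fˣ => ((t.1 ^ ij.1 * t.2 ^ ij.2 : Fˣ) : F)) ''
          {ij : ℤ × ℤ | 0 ≤ ij.1 ∧ ij.1 ≤ (a : ℤ) ∧ 0 ≤ ij.2 ∧ ij.2 ≤ (b : ℤ)}),
      c ≠ 0 →
        ((q : ℤ) - 1) ^ 2 - (a : ℤ) * ((q : ℤ) - 1) - (b : ℤ) * ((q : ℤ) - 1)
            + (a : ℤ) * (b : ℤ) ≤
          (Set.ncard {t : Fˣ × Fˣ | c t ≠ 0} : ℤ) := by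
  classical
  have haq : a < q - 1 := by
    have := le_max_left a b; omega
  have hbq : b < q - 1 := by
    have := le_max_right a b; omega
  have hq1 : 1 ≤ q := by omega
  set mono : Fin (a+1) × Fin (b+1) → (Fˣ × Fˣ → F) :=
    fun p t => (t.1 : F) ^ (p.1 : ℕ) * (t.2 : F) ^ (p.2 : ℕ) with hmono
  have hset : ((fun ij : ℤ × ℤ => fun t : Fˣ × Fˣ => ((t.1 ^ ij.1 * t.2 ^ ij.2 : Fˣ) : F)) ''
          {ij : ℤ × ℤ | 0 ≤ ij.1 ∧ ij.1 ≤ (a : ℤ) ∧ 0 ≤ ij.2 ∧ ij.2 ≤ (b : ℤ)})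
      = Set.range mono := by
    ext f
    constructor
    · rintro ⟨ij, ⟨h1, h2, h3, h4⟩, rfl⟩
      refine ⟨(⟨ij.1.toNat, by omega⟩, ⟨ij.2.toNat, by omega⟩), ?_⟩
      funext t
      simp only [hmono]
      rw [Units.val_mul, unit_zpow_toNat t.1 ij.1 h1, unit_zpow_toNat t.2 ij.2 h3]
    · rintro ⟨p, rfl⟩
      refine ⟨(((p.1 : ℕ) : ℤ), ((p.2 : ℕ) : ℤ)), ⟨by positivity, ?_, by positivity, ?_⟩, ?_⟩
      · show ((p.1 : ℕ) : ℤ) ≤ (a : ℤ)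
        exact_mod_cast Nat.lt_succ_iff.mp p.1.2
      · show ((p.2 : ℕ) : ℤ) ≤ (b : ℤ)
        exact_mod_cast Nat.lt_succ_iff.mp p.2.2
      · funext t
        simp only [hmono]
        rw [zpow_natCast, zpow_natCast]
        simp
  have hli : LinearIndependent F mono := by
    rw [Fintype.linearIndependent_iff]
    intro g hgsum
    by_contra hgn
    push_neg at hgn
    obtain ⟨i, hi⟩ := hgn
    have hg : g ≠ 0 := fun h => hi (by rw [h]; rfl)
    have hkey := key q hF g hg (fun t => ∑ p, g p • mono p t) (by
      intro t
      refine Finset.sum_congr rfl fun p _ => ?_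
      simp only [hmono, smul_eq_mul]
      ring)
    have hzero : (fun t : Fˣ × Fˣ => ∑ p, g p • mono p t) = fun _ => (0 : F) := by
      funext t
      have := congrFun hgsum t
      simpa using this
    simp only [show ∀ t : Fˣ × Fˣ, ∑ p, g p • mono p t = 0 from fun t => congrFun hzero t] at hkey
    simp only [ne_eq, not_true_eq_false, Set.setOf_false, Set.ncard_empty,
      not_false_eq_true, Nat.le_zero] at hkey
    have h1 : 0 < q - 1 - b := by omega
    have h2 : 0 < q - 1 - a := by omega
    have := Nat.mul_pos h1 h2
    omega
  constructor
  · rw [hset, finrank_span_eq_card hli]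
    simp [Fintype.card_prod]
  · intro c hc hc0
    rw [hset, Submodule.mem_span_range_iff_exists_fun] at hc
    obtain ⟨g, hgc⟩ := hc
    have hg : g ≠ 0 := by
      intro h
      apply hc0
      rw [← hgc, h]
      simp
    have hkey := key q hF g hg c (by
      intro t
      rw [← hgc]
      simp only [Finset.sum_apply, Pi.smul_apply, smul_eq_mul, hmono]
      exact Finset.sum_congr rfl fun p _ => by ring)
    have ha1 : a ≤ q - 1 := by omega
    have hb1 : b ≤ q - 1 := by omega
    zify [ha1, hb1, hq1] at hkey
    have heq : ((q : ℤ) - 1) ^ 2 - (a : ℤ) * ((q : ℤ) - 1) - (b : ℤ) * ((q : ℤ) - 1)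
        + (a : ℤ) * (b : ℤ) = ((q : ℤ) - 1 - b) * ((q : ℤ) - 1 - a) := by ring
    rw [heq]
    exact hkey
end
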